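/- arXiv:1711.03839 — 4 statements merged into one kernel-verified Lean document; each statement's English description precedes it below -/
import Mathlib

section
/- Suppose each f_i (i ∈ I) is uniformly bounded. Let {t_k} be a sequence of positive real numbers with t_k → ∞ and let {(x_k,σ_k)} be a sequence of trajectories of the switched system ẋ = f(t,x,σ(t)) such that for some compact set K ⊆ 𝒳 and for every k, x_k(t) ∈ K for all t ∈ [t_k−k, t_k+k] ⊆ [t₀(x_k), t_f(x_k)). Then there exist a subsequence {(x_{k_l},σ_{k_l})}, a continuous function x̄ : ℝ → 𝒳 and a control ū ∈ 𝒰 such that x_{k_l}(t_{k_l}+·) converges to x̄ uniformly on [−T,T] for every T > 0 and σ_{k_l}(t_{k_l}+·) ⇀ ū. -/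
open MeasureTheory Filter Set Topology

noncomputable section

namespace SwitchedSys

/-- Euclidean state space ℝⁿ. -/
abbrev E (n : ℕ) := EuclideanSpace ℝ (Fin n)

/-! ### Comparison function classes -/

/-- Class 𝒦 functions (on [0,∞)). -/
def ClassK (α : ℝ → ℝ) : Prop :=
  ContinuousOn α (Ici 0) ∧ StrictMonoOn α (Ici 0) ∧ α 0 = 0

/-- Class 𝒦∞ functions. -/
def ClassKInf (α : ℝ → ℝ) : Prop :=
  ClassK α ∧ Tendsto α atTop atTop

/-- Class 𝒦ℒ functions. -/
def ClassKL (β : ℝ → ℝ → ℝ) : Prop :=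
  (∀ t, 0 ≤ t → ClassKInf fun r => β r t) ∧
  ∀ r, 0 ≤ r → AntitoneOn (fun t => β r t) (Ici 0) ∧
    Tendsto (fun t => β r t) atTop (nhds 0)

/-! ### Switching signals, controls and weak convergence -/

/-- A switching signal: piecewise constant and continuous from the right, with at most
finitely many jumps in each compact interval. -/
def IsSwitchingSignal {N : ℕ} (σ : ℝ → Fin N) : Prop :=
  ∀ a b : ℝ, a < b → ∃ (k : ℕ) (τ : ℕ → ℝ), τ 0 = a ∧ τ k = b ∧
    (∀ j, j < k → τ j < τ (j + 1)) ∧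
    ∀ j, j < k → ∀ s ∈ Ico (τ j) (τ (j + 1)), σ s = σ (τ j)

/-- The standard simplex U ⊆ ℝᴺ. -/
def simplexU (N : ℕ) : Set (Fin N → ℝ) := {μ | (∀ i, 0 ≤ μ i) ∧ ∑ i, μ i = 1}

/-- The set 𝒰 of admissible controls: measurable functions with values in the simplex. -/
def IsControl {N : ℕ} (u : ℝ → Fin N → ℝ) : Prop :=
  Measurable u ∧ ∀ t, u t ∈ simplexU N

/-- The i-th canonical basis vector of ℝᴺ. -/
def stdVec (N : ℕ) (i : Fin N) : Fin N → ℝ := fun j => if j = i then 1 else 0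

/-- The control u_σ = e_{σ(·)} associated with a switching signal σ. -/
def ctrlOfSwitch {N : ℕ} (σ : ℝ → Fin N) : ℝ → Fin N → ℝ := fun t => stdVec N (σ t)

/-- Weak convergence u_k ⇀ v, tested against all f ∈ L¹(ℝ,ℝᴺ). -/
def WeakConv {N : ℕ} (u : ℕ → ℝ → Fin N → ℝ) (v : ℝ → Fin N → ℝ) : Prop :=
  ∀ g : ℝ → Fin N → ℝ, Integrable g volume →
    Tendsto (fun k => ∫ t : ℝ, ∑ i, g t i * u k t i)
      atTop (nhds (∫ t : ℝ, ∑ i, g t i * v t i))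

/-! ### Regularity notions for time-varying maps -/

/-- g(t,ξ) is uniformly bounded: bounded on J′ × K for each compact K ⊆ 𝒳,
where J′ ⊆ [0,∞) has full measure. -/
def UnifBounded {X F : Type*} [TopologicalSpace X] [NormedAddCommGroup F]
    (𝒳 : Set X) (g : ℝ → X → F) : Prop :=
  ∃ J' ⊆ Ici (0:ℝ), volume (Ici (0:ℝ) \ J') = 0 ∧
    ∀ K : Set X, IsCompact K → K ⊆ 𝒳 → ∃ C : ℝ, ∀ t ∈ J', ∀ ξ ∈ K, ‖g t ξ‖ ≤ C

/-- g(t,ξ) is continuous in ξ uniformly in t (via a class 𝒦 modulus of continuity on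
each compact subset of 𝒳). -/
def ContXiUnifT {X F : Type*} [NormedAddCommGroup X] [NormedAddCommGroup F]
    (𝒳 : Set X) (g : ℝ → X → F) : Prop :=
  ∃ J' ⊆ Ici (0:ℝ), volume (Ici (0:ℝ) \ J') = 0 ∧
    ∀ K : Set X, IsCompact K → K ⊆ 𝒳 → ∃ ω : ℝ → ℝ, ClassK ω ∧
      ∀ t ∈ J', ∀ ξ ∈ K, ∀ ζ ∈ K, ‖g t ξ - g t ζ‖ ≤ ω ‖ξ - ζ‖

/-- g(t,ξ) is locally Lipschitz in ξ uniformly in t. -/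
def LipXiUnifT {X F : Type*} [NormedAddCommGroup X] [NormedAddCommGroup F]
    (𝒳 : Set X) (g : ℝ → X → F) : Prop :=
  ∃ J' ⊆ Ici (0:ℝ), volume (Ici (0:ℝ) \ J') = 0 ∧
    ∀ K : Set X, IsCompact K → K ⊆ 𝒳 → ∃ L : ℝ, 0 ≤ L ∧
      ∀ t ∈ J', ∀ ξ ∈ K, ∀ ζ ∈ K, ‖g t ξ - g t ζ‖ ≤ L * ‖ξ - ζ‖

/-- gγ is the limiting function of g along the sequence γ = {t_k}: g(t_k+s,ξ) → gγ(s,ξ)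
for all ξ ∈ 𝒳 and all s outside a Lebesgue-null set. -/
def IsLimitAlong {X F : Type*} [TopologicalSpace F]
    (𝒳 : Set X) (g : ℝ → X → F) (γ : ℕ → ℝ) (glim : ℝ → X → F) : Prop :=
  ∃ Eγ : Set ℝ, volume Eγ = 0 ∧ ∀ ξ ∈ 𝒳, ∀ s : ℝ, s ∉ Eγ →
    Tendsto (fun k => g (γ k + s) ξ) atTop (nhds (glim s ξ))

/-- γ is an admissible sequence for g. -/
def Admissible {X F : Type*} [TopologicalSpace F]
    (𝒳 : Set X) (g : ℝ → X → F) (γ : ℕ → ℝ) : Prop :=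
  Tendsto γ atTop atTop ∧ ∃ glim : ℝ → X → F, IsLimitAlong 𝒳 g γ glim

/-- g is precompact: every sequence t_k → ∞ has an admissible subsequence. -/
def Precompact {X F : Type*} [TopologicalSpace F]
    (𝒳 : Set X) (g : ℝ → X → F) : Prop :=
  ∀ t : ℕ → ℝ, Tendsto t atTop atTop →
    ∃ φ : ℕ → ℕ, StrictMono φ ∧ Admissible 𝒳 g (t ∘ φ)

/-- (g, gh) is a zeroing pair. -/
def ZeroingPair {X F G : Type*} [NormedAddCommGroup X] [NormedAddCommGroup F]
    [NormedAddCommGroup G] (𝒳 : Set X) (g : ℝ → X → F) (gh : ℝ → X → G) : Prop :=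
  ∀ t : ℕ → ℝ, Tendsto t atTop atTop → ∀ K : Set X, IsCompact K → K ⊆ 𝒳 →
    ∀ ε : ℝ, 0 < ε → ∀ v : ℕ → X, (∀ k, v k ∈ K) → (∀ k, ε ≤ ‖v k‖) →
      Tendsto (fun k => g (t k) (v k)) atTop (nhds 0) →
      Tendsto (fun k => gh (t k) (v k)) atTop (nhds 0)

/-- Carathéodory conditions for a time-varying vector field on 𝒳. -/
def Caratheodory {n : ℕ} (𝒳 : Set (E n)) (g : ℝ → E n → E n) : Prop :=
  (∀ ξ ∈ 𝒳, Measurable fun t => g t ξ) ∧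
  (∀ᵐ t ∂volume.restrict (Ici (0:ℝ)), ContinuousOn (fun ξ => g t ξ) 𝒳) ∧
  ∀ K : Set (E n), IsCompact K → K ⊆ 𝒳 →
    ∃ m : ℝ → ℝ, (∀ a b : ℝ, IntervalIntegrable m volume a b) ∧
      ∀ᵐ t ∂volume.restrict (Ici (0:ℝ)), ∀ ξ ∈ K, ‖g t ξ‖ ≤ m t

/-! ### Solutions and trajectories of the switched system -/

/-- A (forward) solution of ẋ = f(t,x,σ(t)) on [t0, tf), encoded through the equivalent
integral equation (x is locally absolutely continuous with ẋ(t) = f(t,x(t),σ(t)) a.e.). -/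
structure Sol {n N : ℕ} (𝒳 : Set (E n)) (f : ℝ → E n → Fin N → E n) where
  x : ℝ → E n
  σ : ℝ → Fin N
  t0 : ℝ
  tf : EReal
  t0_nonneg : 0 ≤ t0
  t0_lt_tf : (t0 : EReal) < tf
  switching : IsSwitchingSignal σ
  mem : ∀ t : ℝ, t0 ≤ t → (t : EReal) < tf → x t ∈ 𝒳
  intg : ∀ a b : ℝ, t0 ≤ a → a ≤ b → (b : EReal) < tf →
    IntervalIntegrable (fun τ => f τ (x τ) (σ τ)) volume a b
  sol : ∀ a b : ℝ, t0 ≤ a → a ≤ b → (b : EReal) < tf →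
    x b = x a + ∫ τ in a..b, f τ (x τ) (σ τ)

variable {n N : ℕ} {𝒳 : Set (E n)} {f : ℝ → E n → Fin N → E n}

/-- t belongs to the domain [t0, tf) of the solution. -/
def Sol.InDom (T : Sol 𝒳 f) (t : ℝ) : Prop := T.t0 ≤ t ∧ (t : EReal) < T.tf

/-- A solution is maximal if it admits no proper extension (a trajectory is a maximal
solution together with its switching signal). -/
def Sol.IsMaximal (T : Sol 𝒳 f) : Prop :=
  ¬ ∃ T' : Sol 𝒳 f, T'.σ = T.σ ∧ T'.t0 = T.t0 ∧ T.tf < T'.tf ∧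
    ∀ t : ℝ, T.InDom t → T'.x t = T.x t

/-! ### Stability notions -/

/-- Uniform stability of a family of trajectories. -/
def US (𝒯 : Set (Sol 𝒳 f)) : Prop :=
  ∃ α : ℝ → ℝ, ∃ δ₀ : ℝ, ClassK α ∧ 0 < δ₀ ∧
    ∀ T ∈ 𝒯, ∀ s : ℝ, T.InDom s → ‖T.x s‖ ≤ δ₀ →
      ∀ t : ℝ, s ≤ t → (t : EReal) < T.tf → ‖T.x t‖ ≤ α ‖T.x s‖

/-- Global uniform stability of a family of trajectories. -/
def GUS (𝒯 : Set (Sol 𝒳 f)) : Prop :=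
  𝒳 = Set.univ ∧ ∃ α : ℝ → ℝ, ClassKInf α ∧
    ∀ T ∈ 𝒯, ∀ s : ℝ, T.InDom s →
      ∀ t : ℝ, s ≤ t → (t : EReal) < T.tf → ‖T.x t‖ ≤ α ‖T.x s‖

/-- Uniform asymptotic stability of a family of trajectories. -/
def UAS (𝒯 : Set (Sol 𝒳 f)) : Prop :=
  ∃ β : ℝ → ℝ → ℝ, ∃ δ₀ : ℝ, ClassKL β ∧ 0 < δ₀ ∧
    ∀ T ∈ 𝒯, ∀ s : ℝ, T.InDom s → ‖T.x s‖ < δ₀ →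
      ∀ t : ℝ, s ≤ t → (t : EReal) < T.tf → ‖T.x t‖ ≤ β ‖T.x s‖ (t - s)

/-- Global uniform asymptotic stability of a family of trajectories. -/
def GUAS (𝒯 : Set (Sol 𝒳 f)) : Prop :=
  𝒳 = Set.univ ∧ ∃ β : ℝ → ℝ → ℝ, ClassKL β ∧
    ∀ T ∈ 𝒯, ∀ s : ℝ, T.InDom s →
      ∀ t : ℝ, s ≤ t → (t : EReal) < T.tf → ‖T.x t‖ ≤ β ‖T.x s‖ (t - s)

/-! ### Output maps, zeroing-output sequences and WZSD -/

/-- A 𝒯-zeroing-output sequence for the switched system with output map h. -/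
def ZeroingOutputSeq {F : Type*} [NormedAddCommGroup F]
    (𝒯 : Set (Sol 𝒳 f)) (h : ℝ → E n → Fin N → F)
    (t : ℕ → ℝ) (T : ℕ → Sol 𝒳 f) : Prop :=
  Tendsto t atTop atTop ∧ (∀ k, T k ∈ 𝒯) ∧
  (∀ k : ℕ, (T k).t0 ≤ t k - k ∧ ((t k + k : ℝ) : EReal) < (T k).tf) ∧
  (∃ K : Set (E n), IsCompact K ∧ K ⊆ 𝒳 ∧ ∃ ε : ℝ, 0 < ε ∧
    ∀ k : ℕ, ∀ s : ℝ, |s| ≤ (k : ℝ) →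
      (T k).x (t k + s) ∈ K ∧ ε ≤ ‖(T k).x (t k + s)‖) ∧
  ∀ᵐ s : ℝ, Tendsto (fun k => h (t k + s) ((T k).x (t k + s)) ((T k).σ (t k + s)))
    atTop (nhds 0)

/-- The pair (h,f) is weakly zero-state detectable with respect to 𝒯:
there is no 𝒯-zeroing-output sequence. -/
def WZSD {F : Type*} [NormedAddCommGroup F]
    (𝒯 : Set (Sol 𝒳 f)) (h : ℝ → E n → Fin N → F) : Prop :=
  ¬ ∃ (t : ℕ → ℝ) (T : ℕ → Sol 𝒳 f), ZeroingOutputSeq 𝒯 h t T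

/-- Assumption 1: integral bound for the output along trajectories of 𝒯. -/
def IntegralOutputBound {F : Type*} [NormedAddCommGroup F]
    (𝒯 : Set (Sol 𝒳 f)) (h : ℝ → E n → Fin N → F) : Prop :=
  ∃ α : ℝ → ℝ, ContinuousOn α (Ici 0) ∧ α 0 = 0 ∧ (∀ r : ℝ, 0 < r → 0 < α r) ∧
    ∀ K : Set (E n), IsCompact K → K ⊆ 𝒳 → ∀ μ : ℝ, 0 < μ → ∃ M : ℝ, 0 < M ∧
      ∀ T ∈ 𝒯, ∀ s t : ℝ, T.t0 ≤ s → s < t → (t : EReal) < T.tf →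
        (∀ τ ∈ Icc s t, T.x τ ∈ K) →
        ∫ τ in s..t, α ‖h τ (T.x τ) (T.σ τ)‖ ≤ M + μ * (t - s)

/-! ### Coverings, limiting trajectories and reduced limiting control systems -/

/-- The set U_ξ = co{e_i : ξ ∈ χ_i} of control values compatible with the covering χ at ξ. -/
def Uset {N n : ℕ} (χ : Fin N → Set (E n)) (ξ : E n) : Set (Fin N → ℝ) :=
  convexHull ℝ {v : Fin N → ℝ | ∃ i, ξ ∈ χ i ∧ v = stdVec N i}

/-- 𝒯 is invariant with respect to the covering χ: x(t) ∈ χ_{σ(t)} along trajectories. -/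
def InvariantWrt (𝒯 : Set (Sol 𝒳 f)) (χ : Fin N → Set (E n)) : Prop :=
  ∀ T ∈ 𝒯, ∀ t : ℝ, T.InDom t → T.x t ∈ χ (T.σ t)

/-- The set 𝒮*_𝒯 of controls that are weak limits of time-translations of switching
signals of trajectories in 𝒯. -/
def SStar (𝒯 : Set (Sol 𝒳 f)) (u : ℝ → Fin N → ℝ) : Prop :=
  IsControl u ∧ ∃ (t : ℕ → ℝ) (T : ℕ → Sol 𝒳 f),
    Tendsto t atTop atTop ∧ (∀ k, T k ∈ 𝒯) ∧
    WeakConv (fun k s => ctrlOfSwitch (T k).σ (t k + s)) u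

/-- Limiting trajectory of the family 𝒯. -/
def LimitingTrajectory (𝒯 : Set (Sol 𝒳 f)) (xb : ℝ → E n) (ub : ℝ → Fin N → ℝ) : Prop :=
  Continuous xb ∧ (∀ t, xb t ∈ 𝒳) ∧ IsControl ub ∧
  ∃ (t : ℕ → ℝ) (T : ℕ → Sol 𝒳 f) (K : Set (E n)),
    Tendsto t atTop atTop ∧ (∀ k, T k ∈ 𝒯) ∧ IsCompact K ∧ K ⊆ 𝒳 ∧
    (∀ k : ℕ, (T k).t0 ≤ t k - k ∧ ((t k + k : ℝ) : EReal) < (T k).tf) ∧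
    (∀ k : ℕ, ∀ s : ℝ, |s| ≤ (k : ℝ) → (T k).x (t k + s) ∈ K) ∧
    (∀ Tc : ℝ, 0 < Tc →
      TendstoUniformlyOn (fun k s => (T k).x (t k + s)) xb atTop (Icc (-Tc) Tc)) ∧
    WeakConv (fun k s => ctrlOfSwitch (T k).σ (t k + s)) ub

/-- 𝒯-zeroing-output limiting trajectory. -/
def ZeroingOutputLimitingTrajectory {F : Type*} [NormedAddCommGroup F]
    (𝒯 : Set (Sol 𝒳 f)) (h : ℝ → E n → Fin N → F)
    (xb : ℝ → E n) (ub : ℝ → Fin N → ℝ) : Prop :=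
  Continuous xb ∧ (∀ t, xb t ∈ 𝒳) ∧ IsControl ub ∧
  ∃ (t : ℕ → ℝ) (T : ℕ → Sol 𝒳 f), ZeroingOutputSeq 𝒯 h t T ∧
    (∀ Tc : ℝ, 0 < Tc →
      TendstoUniformlyOn (fun k s => (T k).x (t k + s)) xb atTop (Icc (-Tc) Tc)) ∧
    WeakConv (fun k s => ctrlOfSwitch (T k).σ (t k + s)) ub

/-- Locally absolutely continuous function on ℝ (indefinite integral of a locally
integrable function). -/
def LocAC {V : Type*} [NormedAddCommGroup V] [NormedSpace ℝ V] (x : ℝ → V) : Prop :=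
  ∃ g : ℝ → V, (∀ a b : ℝ, IntervalIntegrable g volume a b) ∧
    ∀ t : ℝ, x t = x 0 + ∫ s in (0:ℝ)..t, g s

/-- A complete trajectory of the reduced limiting control system Σ_γ determined by the
limiting functions fl = (f̂_{i,γ}) and hl = (h_{i,γ}), the covering χ and the constraint
u ∈ 𝒮*_𝒯: x is locally absolutely continuous and, for a.e. t, u(t) ∈ U_{x(t)},
x′(t) = Σ_i u_i(t) f̂_{i,γ}(t,x(t)) and Σ_i u_i(t) |h_{i,γ}(t,x(t))| = 0. -/
def CompleteTrajOf {F : Type*} [NormedAddCommGroup F]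
    (𝒯 : Set (Sol 𝒳 f)) (χ : Fin N → Set (E n))
    (fl : Fin N → ℝ → E n → E n) (hl : Fin N → ℝ → E n → F)
    (x : ℝ → E n) (u : ℝ → Fin N → ℝ) : Prop :=
  (∀ t, x t ∈ 𝒳) ∧ LocAC x ∧ SStar 𝒯 u ∧
  ∀ᵐ t : ℝ, u t ∈ Uset χ (x t) ∧
    HasDerivAt x (∑ i, u t i • fl i t (x t)) t ∧
    ∑ i, u t i * ‖hl i t (x t)‖ = 0

/-- A bounded complete trajectory: the state stays in a compact subset of 𝒳. -/
def BoundedRange (𝒳 : Set (E n)) (x : ℝ → E n) : Prop :=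
  ∃ K : Set (E n), IsCompact K ∧ K ⊆ 𝒳 ∧ ∀ t : ℝ, x t ∈ K

end SwitchedSys

open SwitchedSys Filter Set

section Helpers
open scoped ENNReal NNReal

lemma tau_mono (τ : ℕ → ℝ) (k : ℕ) (hmono : ∀ j, j < k → τ j < τ (j+1)) :
    τ 0 ≤ τ k := by
  induction k with
  | zero => exact le_refl _
  | succ k ih =>
    exact le_trans (ih (fun j hj => hmono j (hj.trans (Nat.lt_succ_self k))))
      (hmono k (Nat.lt_succ_self k)).le

lemma Ico_eq_biUnion (τ : ℕ → ℝ) (k : ℕ) (hmono : ∀ j, j < k → τ j < τ (j+1)) :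
    Ico (τ 0) (τ k) = ⋃ j ∈ Finset.range k, Ico (τ j) (τ (j+1)) := by
  induction k with
  | zero => simp
  | succ k ih =>
    have h' : ∀ j, j < k → τ j < τ (j+1) := fun j hj => hmono j (hj.trans (Nat.lt_succ_self k))
    rw [Finset.range_add_one]
    rw [show (⋃ j ∈ insert k (Finset.range k), Ico (τ j) (τ (j+1)))
        = (⋃ j ∈ Finset.range k, Ico (τ j) (τ (j+1))) ∪ Ico (τ k) (τ (k+1)) by
      simp [Set.biUnion_insert, Set.union_comm]]
    rw [← ih h', Set.Ico_union_Ico_eq_Ico (tau_mono τ k h') (hmono k (Nat.lt_succ_self k)).le]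

lemma SwitchedSys.IsSwitchingSignal.measurable' {N : ℕ} {σ : ℝ → Fin N} (h : SwitchedSys.IsSwitchingSignal σ) :
    Measurable σ := by
  apply measurable_to_countable'
  intro i
  have hIco : ∀ a b : ℝ, MeasurableSet (Ico a b ∩ σ ⁻¹' {i}) := by
    intro a b
    rcases le_or_gt b a with hab | hab
    · rw [Ico_eq_empty (not_lt.2 hab)]; simp
    obtain ⟨k, τ, h0, hk, hmono, hconst⟩ := h a b hab
    have : Ico a b ∩ σ ⁻¹' {i}
        = ⋃ j ∈ Finset.range k, (Ico (τ j) (τ (j+1)) ∩ {x | σ (τ j) = i}) := by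
      rw [← h0, ← hk, Ico_eq_biUnion τ k hmono]
      ext x
      simp only [Set.mem_inter_iff, Set.mem_iUnion, Set.mem_preimage, Set.mem_singleton_iff,
        Finset.mem_range, Set.mem_setOf_eq, exists_prop]
      constructor
      · rintro ⟨⟨j, hj, hx⟩, hσ⟩
        exact ⟨j, hj, hx, by rw [← hconst j hj x hx, hσ]⟩
      · rintro ⟨j, hj, hx, hσ⟩
        exact ⟨⟨j, hj, hx⟩, by rw [hconst j hj x hx, hσ]⟩
    rw [this]
    exact MeasurableSet.biUnion (Finset.range k).countable_toSet (fun j _ =>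
      measurableSet_Ico.inter (MeasurableSet.const _))
  have : σ ⁻¹' {i} = ⋃ m : ℕ, (Ico (-(m+1) : ℝ) (m+1) ∩ σ ⁻¹' {i}) := by
    ext x
    simp only [Set.mem_iUnion, Set.mem_inter_iff, Set.mem_Ico, Set.mem_preimage]
    constructor
    · intro hx
      obtain ⟨m, hm⟩ := exists_nat_gt |x|
      exact ⟨m, ⟨by have := abs_lt.1 hm; push_cast; linarith [this.1.le],
        by have := abs_lt.1 hm; push_cast; linarith [this.2]⟩, hx⟩
    · rintro ⟨m, _, hx⟩; exact hx
  rw [this]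
  exact MeasurableSet.iUnion (fun m => hIco _ _)

lemma exists_lim_of_equilip {X : Type*} [MetricSpace X] [CompleteSpace X]
    (Y : ℕ → ℝ → X) (C : ℝ) (hC : 0 ≤ C) (s : ℝ)
    (hlip : ∀ᶠ l in atTop, ∀ b : ℝ, |b - s| ≤ 1 → dist (Y l b) (Y l s) ≤ C * |b - s|)
    (hq : ∀ q : ℚ, ∃ p, Tendsto (fun l => Y l (q : ℝ)) atTop (𝓝 p)) :
    ∃ p, Tendsto (fun l => Y l s) atTop (𝓝 p) := by
  apply cauchySeq_tendsto_of_complete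
  rw [Metric.cauchySeq_iff]
  intro ε hε
  have hδ : 0 < min 1 (ε / (4 * (C + 1))) := lt_min one_pos (by positivity)
  obtain ⟨q, hq'⟩ := exists_rat_near s hδ
  have hq1 : |(q : ℝ) - s| ≤ 1 := by
    rw [abs_sub_comm]; exact (le_of_lt (lt_of_lt_of_le hq' (min_le_left _ _)))
  have hqε : |(q : ℝ) - s| ≤ ε / (4 * (C + 1)) := by
    rw [abs_sub_comm]; exact (le_of_lt (lt_of_lt_of_le hq' (min_le_right _ _)))
  obtain ⟨p, hp⟩ := hq q
  have hcau := hp.cauchySeq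
  rw [Metric.cauchySeq_iff] at hcau
  obtain ⟨N1, hN1⟩ := hcau (ε/2) (by positivity)
  obtain ⟨N2, hN2⟩ := eventually_atTop.1 hlip
  refine ⟨max N1 N2, fun m hm l hl => ?_⟩
  have h1 := hN2 m (le_trans (le_max_right _ _) hm) q hq1
  have h2 := hN2 l (le_trans (le_max_right _ _) hl) q hq1
  have h3 := hN1 m (le_trans (le_max_left _ _) hm) l (le_trans (le_max_left _ _) hl)
  have hC1 : C * |(q:ℝ) - s| ≤ ε / 4 := by
    calc C * |(q:ℝ) - s| ≤ (C+1) * (ε / (4 * (C + 1))) := by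
          apply mul_le_mul (by linarith) hqε (abs_nonneg _) (by linarith)
    _ = ε / 4 := by field_simp
  calc dist (Y m s) (Y l s)
      ≤ dist (Y m s) (Y m q) + dist (Y m q) (Y l q) + dist (Y l q) (Y l s) := dist_triangle4 _ _ _ _
    _ < C * |(q:ℝ) - s| + (ε/2) + C * |(q:ℝ) - s| := by
        refine add_lt_add_of_lt_of_le (add_lt_add_of_le_of_lt ?_ h3) ?_
        · rw [dist_comm]; exact h1
        · exact h2
    _ ≤ ε := by linarith

lemma tendstoUniformlyOn_of_equilip {X : Type*} [MetricSpace X]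
    (Y : ℕ → ℝ → X) (xb : ℝ → X) (C T : ℝ) (hC : 0 ≤ C)
    (hlip : ∀ᶠ l in atTop, ∀ a ∈ Icc (-T) T, ∀ b ∈ Icc (-T) T,
      dist (Y l a) (Y l b) ≤ C * dist a b)
    (hpt : ∀ s ∈ Icc (-T) T, Tendsto (fun l => Y l s) atTop (𝓝 (xb s))) :
    TendstoUniformlyOn Y xb atTop (Icc (-T) T) := by
  have hxlip : ∀ a ∈ Icc (-T) T, ∀ b ∈ Icc (-T) T, dist (xb a) (xb b) ≤ C * dist a b := by
    intro a ha b hb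
    refine le_of_tendsto ((hpt a ha).dist (hpt b hb)) ?_
    filter_upwards [hlip] with l hl using hl a ha b hb
  rw [Metric.tendstoUniformlyOn_iff]
  intro ε hε
  set δ := ε / (4 * (C + 1)) with hδdef
  have hδ : 0 < δ := by positivity
  obtain ⟨t, hts, htfin, hcov⟩ := (isCompact_Icc (a := -T) (b := T)).elim_finite_subcover_image
    (fun c (_ : c ∈ Icc (-T) T) => Metric.isOpen_ball (x := c) (ε := δ))
    (fun s hs => Set.mem_biUnion hs (Metric.mem_ball_self hδ))
  have hev : ∀ᶠ l in atTop, ∀ c ∈ t, dist (xb c) (Y l c) < ε / 2 := by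
    rw [Filter.eventually_all_finite htfin]
    intro c hc
    have h0 : Tendsto (fun l => dist (xb c) (Y l c)) atTop (𝓝 0) := by
      simpa using (tendsto_const_nhds (x := xb c)).dist (hpt c (hts hc))
    exact h0.eventually_lt_const (by positivity)
  have hCδ : (C + 1) * δ = ε / 4 := by rw [hδdef]; field_simp
  filter_upwards [hlip, hev] with l hl1 hl2
  intro s hs
  obtain ⟨c, hc, hsc⟩ := Set.mem_iUnion₂.1 (hcov hs)
  have hcI : c ∈ Icc (-T) T := hts hc
  have hd : dist s c < δ := Metric.mem_ball.1 hsc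
  have b1 : dist (xb s) (xb c) ≤ ε / 4 := by
    calc dist (xb s) (xb c) ≤ C * dist s c := hxlip s hs c hcI
      _ ≤ (C + 1) * δ := by nlinarith [dist_nonneg (x := s) (y := c)]
      _ = ε / 4 := hCδ
  have b3 : dist (Y l c) (Y l s) ≤ ε / 4 := by
    calc dist (Y l c) (Y l s) ≤ C * dist c s := hl1 c hcI s hs
      _ ≤ (C + 1) * δ := by rw [dist_comm]; nlinarith [dist_nonneg (x := s) (y := c)]
      _ = ε / 4 := hCδ
  calc dist (xb s) (Y l s)
      ≤ dist (xb s) (xb c) + dist (xb c) (Y l c) + dist (Y l c) (Y l s) := dist_triangle4 _ _ _ _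
    _ < ε / 4 + ε / 2 + ε / 4 := by
        exact add_lt_add_of_lt_of_le (add_lt_add_of_le_of_lt b1 (hl2 c hc)) b3
    _ = ε := by ring

lemma withDensity_finset_sum {α : Type*} [MeasurableSpace α] (μ : Measure α) {ι : Type*}
    (s : Finset ι) (f : ι → α → ℝ≥0∞) (hf : ∀ i, Measurable (f i)) :
    μ.withDensity (∑ i ∈ s, f i) = ∑ i ∈ s, μ.withDensity (f i) := by
  classical
  induction s using Finset.induction with
  | empty => simp
  | insert a s h ih =>
    rw [Finset.sum_insert h, Finset.sum_insert h, withDensity_add_left (hf _), ih]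

lemma exists_density {N : ℕ} (F : Fin (N+1) → ℝ → ℝ)
    (hmono : ∀ i, Monotone (F i))
    (hlip : ∀ i, ∀ a b : ℝ, a ≤ b → F i b - F i a ≤ b - a)
    (hsum : ∀ a b : ℝ, a ≤ b → ∑ i, (F i b - F i a) = b - a) :
    ∃ u : ℝ → Fin (N+1) → ℝ, Measurable u ∧ (∀ t, u t ∈ SwitchedSys.simplexU (N+1)) ∧
      ∀ i, ∀ a b : ℝ, a ≤ b → ∫ t in Ioc a b, u t i = F i b - F i a := by
  -- continuity of each F i
  have hcont : ∀ i, Continuous (F i) := by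
    intro i
    refine (LipschitzWith.of_dist_le_mul (K := 1) (fun a b => ?_)).continuous
    rw [Real.dist_eq, Real.dist_eq, NNReal.coe_one, one_mul]
    rcases le_total a b with hab | hab
    · rw [abs_of_nonpos (by linarith [hmono i hab]), abs_of_nonpos (by linarith)]
      have := hlip i a b hab; linarith
    · rw [abs_of_nonneg (by linarith [hmono i hab]), abs_of_nonneg (by linarith)]
      have := hlip i b a hab; linarith
  set S : Fin (N+1) → StieltjesFunction ℝ := fun i =>
    ⟨F i, hmono i, fun x => (hcont i).continuousWithinAt⟩ with hS
  set S' : Fin (N+1) → StieltjesFunction ℝ := fun i =>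
    ⟨fun x => x - F i x, fun a b hab => by
        simp only; have := hlip i a b hab; linarith,
      fun x => (continuous_id.sub (hcont i)).continuousWithinAt⟩ with hS'
  have hSIoc : ∀ i, ∀ a b : ℝ, (S i).measure (Ioc a b) = ENNReal.ofReal (F i b - F i a) := by
    intro i a b; exact StieltjesFunction.measure_Ioc _ a b
  -- each (S i).measure + (S' i).measure = volume
  have hvol : ∀ i, volume = (S i).measure + (S' i).measure := by
    intro i
    refine MeasureTheory.Measure.ext_of_Ioc _ _ (fun a b hab => ?_)
    refine Eq.symm ?_
    rw [Measure.add_apply, hSIoc, StieltjesFunction.measure_Ioc, Real.volume_Ioc]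
    have h1 : 0 ≤ F i b - F i a := by linarith [hmono i hab.le]
    have h2 := hlip i a b hab.le
    rw [← ENNReal.ofReal_add h1 (by simp only [hS']; linarith)]
    congr 1; simp only [hS']; ring
  have hle : ∀ i, (S i).measure ≤ volume := by
    intro i; rw [hvol i]; exact Measure.le_add_right (le_refl _)
  have hac : ∀ i, (S i).measure ≪ volume := fun i => Measure.absolutelyContinuous_of_le (hle i)
  set d : Fin (N+1) → ℝ → ℝ≥0∞ := fun i => (S i).measure.rnDeriv volume with hd
  have hdmeas : ∀ i, Measurable (d i) := fun i => Measure.measurable_rnDeriv _ _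
  have hd1 : ∀ i, d i ≤ᵐ[volume] 1 := fun i => Measure.rnDeriv_le_one_of_le (hle i)
  have hdlt : ∀ i, ∀ᵐ t, d i t < ∞ := fun i => Measure.rnDeriv_lt_top _ _
  -- sum of measures is volume
  have hsummeas : volume = ∑ i, (S i).measure := by
    refine MeasureTheory.Measure.ext_of_Ioc _ _ (fun a b hab => Eq.symm ?_)
    rw [Measure.finset_sum_apply, Real.volume_Ioc]
    calc (∑ i, (S i).measure (Ioc a b)) = ∑ i, ENNReal.ofReal (F i b - F i a) := by
          exact Finset.sum_congr rfl (fun i _ => hSIoc i a b)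
      _ = ENNReal.ofReal (∑ i, (F i b - F i a)) := by
          rw [ENNReal.ofReal_sum_of_nonneg (fun i _ => by linarith [hmono i hab.le])]
      _ = ENNReal.ofReal (b - a) := by rw [hsum a b hab.le]
  have hwd : ∀ i, volume.withDensity (d i) = (S i).measure := fun i =>
    Measure.withDensity_rnDeriv_eq _ _ (hac i)
  have hvolwd : volume.withDensity (∑ i, d i) = volume := by
    rw [withDensity_finset_sum _ _ _ hdmeas]
    rw [Finset.sum_congr rfl (fun i _ => hwd i), ← hsummeas]
  have hsum1 : (fun tt => ∑ i, d i tt) =ᵐ[volume] 1 := by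
    have hgeq : (fun tt => ∑ i, d i tt) = ∑ i, d i := by
      funext tt; simp [Finset.sum_apply]
    have h1 := Measure.eq_rnDeriv (μ := volume) (ν := volume) (s := 0)
      (f := fun tt => ∑ i, d i tt)
      (Finset.measurable_sum _ (fun i _ => hdmeas i)) (Measure.MutuallySingular.zero_left)
      (by rw [zero_add, hgeq, hvolwd])
    exact h1.trans (Measure.rnDeriv_self _)
  -- good set
  have hae : ∀ᵐ t, (∀ i, d i t ≤ 1) ∧ (∑ i, d i t) = 1 := by
    have h1 : ∀ᵐ t, ∀ i, d i t ≤ 1 := (ae_all_iff).2 (fun i => hd1 i)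
    filter_upwards [h1, hsum1] with t ht1 ht2
    refine ⟨fun i => ht1 i, by simpa using ht2⟩
  rw [MeasureTheory.ae_iff] at hae
  obtain ⟨B, hBsub, hBmeas, hB0⟩ := exists_measurable_superset_of_null hae
  classical
  set u : ℝ → Fin (N+1) → ℝ := fun t => if t ∈ B then (fun j => if j = 0 then 1 else 0)
    else fun i => (d i t).toReal with hu
  have hgood : ∀ t ∉ B, (∀ i, d i t ≤ 1) ∧ (∑ i, d i t) = 1 := by
    intro t ht
    by_contra hcon
    exact ht (hBsub hcon)
  refine ⟨u, ?_, ?_, ?_⟩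
  · refine Measurable.ite hBmeas measurable_const ?_
    exact measurable_pi_lambda _ (fun i => (hdmeas i).ennreal_toReal)
  · intro t
    by_cases htB : t ∈ B
    · simp only [hu, htB, if_pos]
      constructor
      · intro i; by_cases h : i = 0 <;> simp [h]
      · simp [Finset.sum_ite_eq']
    · simp only [hu, htB, if_neg, not_false_iff]
      obtain ⟨h1, h2⟩ := hgood t htB
      constructor
      · intro i; exact ENNReal.toReal_nonneg
      · rw [← ENNReal.toReal_sum (fun i _ => (lt_of_le_of_lt (h1 i) (by norm_num)).ne)]
        · rw [show (∑ i, d i t) = 1 from by simpa using h2]; simp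
  · intro i a b hab
    have hcongr : ∀ᵐ t, ∀ (_ : t ∈ Ioc a b), u t i = (d i t).toReal := by
      have : ∀ᵐ t, t ∉ B := by
        rw [MeasureTheory.ae_iff]; simpa using hB0
      filter_upwards [this] with t ht _
      simp [hu, ht]
    have h1 : ∫ t in Ioc a b, u t i = ∫ t in Ioc a b, (d i t).toReal := by
      refine MeasureTheory.setIntegral_congr_ae measurableSet_Ioc ?_
      filter_upwards [hcongr] with t ht hmem using ht hmem
    rw [h1]
    rw [MeasureTheory.integral_toReal ((hdmeas i).aemeasurable.restrict)
      (ae_restrict_of_ae (hdlt i))]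
    rw [Measure.setLIntegral_rnDeriv (hac i)]
    rw [hSIoc i a b, ENNReal.toReal_ofReal (by linarith [hmono i hab])]

lemma integrable_mul_bdd {w g : ℝ → ℝ} (hg : Integrable g) (hwm : AEStronglyMeasurable w volume)
    (hwb : ∀ x, |w x| ≤ 2) : Integrable (fun x => g x * w x) := by
  have := Integrable.bdd_mul (c := 2) hg hwm (ae_of_all _ fun x => by simpa [Real.norm_eq_abs] using hwb x)
  exact this.congr (ae_of_all _ (fun x => mul_comm _ _))

lemma key_weak_cont (w : ℕ → ℝ → ℝ) (hwm : ∀ l, Measurable (w l)) (hwb : ∀ l t, |w l t| ≤ 2)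
    (hW : ∀ δ : ℝ, 0 < δ → ∀ s : ℝ, Tendsto (fun l => ∫ τ in (s - δ)..s, w l τ) atTop (𝓝 0))
    {h : ℝ → ℝ} (hcont : Continuous h) (hsupp : HasCompactSupport h) :
    Tendsto (fun l => ∫ tt, h tt * w l tt) atTop (𝓝 0) := by
  have hwint : ∀ l (a b : ℝ), IntervalIntegrable (w l) volume a b := by
    intro l a b
    constructor <;>
    · refine Integrable.mono' (g := fun _ : ℝ => (2:ℝ))
        (integrableOn_const measure_Ioc_lt_top.ne)
        ((hwm l).aestronglyMeasurable.restrict) ?_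
      exact ae_of_all _ fun x => by simpa [Real.norm_eq_abs] using hwb l x
  have hint : Integrable h := hcont.integrable_of_hasCompactSupport hsupp
  obtain ⟨M0, hM0⟩ := hsupp.isBounded.subset_closedBall 0
  set M : ℝ := max M0 0 with hM
  have hMnonneg : 0 ≤ M := le_max_right _ _
  have hh0 : ∀ x : ℝ, M < |x| → h x = 0 := by
    intro x hx
    by_contra hne
    have hx1 : x ∈ tsupport h := subset_tsupport h (by simpa [Function.mem_support] using hne)
    have hx2 := hM0 hx1
    rw [Metric.mem_closedBall, Real.dist_eq, sub_zero] at hx2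
    have : |x| ≤ M := le_trans hx2 (le_max_left _ _)
    linarith
  obtain ⟨Ch, hCh⟩ := hsupp.exists_bound_of_continuous hcont
  have hChnn : 0 ≤ Ch := le_trans (norm_nonneg (h 0)) (hCh 0)
  refine Metric.tendsto_nhds.2 (fun ε hε => ?_)
  have hunif := hsupp.uniformContinuous_of_continuous hcont
  set η := ε / (16 * (M + 2)) with hη
  have hηpos : 0 < η := by positivity
  obtain ⟨δ0, hδ0pos, hδ0⟩ := Metric.uniformContinuous_iff.1 hunif η hηpos
  set δ := min 1 (δ0 / 2) with hδdef
  have hδpos : 0 < δ := lt_min one_pos (by positivity)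
  have hδle1 : δ ≤ 1 := min_le_left _ _
  have hδne : δ ≠ 0 := ne_of_gt hδpos
  have hδlt : ∀ a b : ℝ, |a - b| ≤ δ → |h a - h b| ≤ η := by
    intro a b hab
    have h2 : δ < δ0 := lt_of_le_of_lt (min_le_right _ _) (by linarith)
    have h3 : dist a b < δ0 := by rw [Real.dist_eq]; linarith
    exact le_of_lt (by simpa [Real.dist_eq] using hδ0 h3)
  set A : ℝ → ℝ := fun u => δ⁻¹ * ∫ s in u..(u+δ), h s with hA
  set H : ℝ → ℝ := fun x => ∫ s in (0:ℝ)..x, h s with hHdef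
  have hHcont : Continuous H := by
    rw [hHdef]
    exact intervalIntegral.continuous_primitive (f := h) (μ := volume)
      (fun a b => hcont.intervalIntegrable a b) 0
  have hAviaH : ∀ u : ℝ, A u = δ⁻¹ * (H (u+δ) - H u) := by
    intro u
    have := intervalIntegral.integral_interval_sub_left
      (hcont.intervalIntegrable (μ := volume) 0 (u+δ)) (hcont.intervalIntegrable (μ := volume) 0 u)
    simp only [hA, hHdef]
    rw [← this]
  have hAcont : Continuous A := by
    have hc : Continuous fun u : ℝ => δ⁻¹ * (H (u+δ) - H u) :=
      continuous_const.mul ((hHcont.comp (continuous_id.add continuous_const)).sub hHcont)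
    exact hc.congr (fun u => (hAviaH u).symm)
  have hAclose : ∀ u : ℝ, |h u - A u| ≤ η := by
    intro u
    have hle : u ≤ u + δ := by linarith
    have h1 : ∫ s in u..(u+δ), (h s - h u) = (∫ s in u..(u+δ), h s) - δ * h u := by
      rw [intervalIntegral.integral_sub (hcont.intervalIntegrable _ _) intervalIntegrable_const,
        intervalIntegral.integral_const]
      simp only [add_sub_cancel_left, smul_eq_mul]
    have h2 : |∫ s in u..(u+δ), (h s - h u)| ≤ η * |u + δ - u| := by
      rw [← Real.norm_eq_abs]
      refine intervalIntegral.norm_integral_le_of_norm_le_const (fun x hx => ?_)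
      rw [Set.uIoc_of_le hle, Set.mem_Ioc] at hx
      rw [Real.norm_eq_abs]
      refine hδlt x u ?_
      rw [abs_of_pos (by linarith [hx.1] : (0:ℝ) < x - u)]
      linarith [hx.2]
    have h3 : A u - h u = δ⁻¹ * ((∫ s in u..(u+δ), h s) - δ * h u) := by
      rw [hA]; simp only; field_simp
    have h4 : |h u - A u| = δ⁻¹ * |∫ s in u..(u+δ), (h s - h u)| := by
      rw [abs_sub_comm, h3, ← h1, abs_mul, abs_inv, abs_of_pos hδpos]
    have h5 : |u + δ - u| = δ := by rw [add_sub_cancel_left, abs_of_pos hδpos]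
    rw [h5] at h2
    rw [h4]
    calc δ⁻¹ * |∫ s in u..(u+δ), (h s - h u)| ≤ δ⁻¹ * (η * δ) :=
          mul_le_mul_of_nonneg_left h2 (by positivity)
      _ = η := by field_simp
  have hAsupp0 : ∀ u : ℝ, M + 1 < |u| → A u = 0 := by
    intro u hu
    have hzero : ∀ s ∈ Set.uIcc u (u+δ), h s = 0 := by
      intro s hs
      rw [Set.uIcc_of_le (by linarith)] at hs
      obtain ⟨h1s, h2s⟩ := hs
      apply hh0
      rcases lt_or_ge u 0 with hneg | hpos
      · have : u < -(M+1) := by rw [abs_of_neg hneg] at hu; linarith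
        have : s < -M := by linarith
        rw [abs_of_neg (by linarith)]; linarith
      · have : M + 1 < u := by rw [abs_of_nonneg hpos] at hu; linarith
        rw [abs_of_nonneg (by linarith)]; linarith
    have : ∫ s in u..(u+δ), h s = ∫ s in u..(u+δ), (0:ℝ) :=
      intervalIntegral.integral_congr hzero
    rw [hA]; simp only [this, intervalIntegral.integral_zero, mul_zero]
  have hAsupp : HasCompactSupport A := by
    refine HasCompactSupport.intro (isCompact_Icc (a := -(M+1)) (b := M+1)) (fun x hx => ?_)
    apply hAsupp0
    rw [Set.mem_Icc] at hx
    push_neg at hx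
    rcases le_or_gt (-(M+1)) x with hc | hc
    · have := hx hc; rw [abs_of_pos (by linarith)]; linarith
    · rw [abs_of_neg (by linarith)]; linarith
  have hAint : Integrable A := hAcont.integrable_of_hasCompactSupport hAsupp
  have hsubint : Integrable (fun u => h u - A u) := hint.sub hAint
  -- first bound
  have key1 : ∀ l, |∫ u, (h u - A u) * w l u| ≤ ε / 4 := by
    intro l
    have hb : ∀ u, ‖(h u - A u) * w l u‖ ≤
        Set.indicator (Icc (-(M+1)) (M+1)) (fun _ => 2*η) u := by
      intro u
      by_cases hu : u ∈ Icc (-(M+1)) (M+1)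
      · rw [Set.indicator_of_mem hu, Real.norm_eq_abs, abs_mul]
        calc |h u - A u| * |w l u| ≤ η * 2 :=
              mul_le_mul (hAclose u) (hwb l u) (abs_nonneg _) (le_of_lt hηpos)
          _ = 2 * η := by ring
      · rw [Set.indicator_of_notMem hu]
        have habs : M + 1 < |u| := by
          rw [Set.mem_Icc] at hu; push_neg at hu
          rcases le_or_gt (-(M+1)) u with hc | hc
          · have := hu hc; rw [abs_of_pos (by linarith)]; linarith
          · rw [abs_of_neg (by linarith)]; linarith
        have h1 : h u = 0 := hh0 u (by linarith)
        have h2 : A u = 0 := hAsupp0 u habs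
        simp [h1, h2]
    have hrhsint : Integrable (Set.indicator (Icc (-(M+1)) (M+1)) (fun _ => 2*η)) := by
      rw [integrable_indicator_iff measurableSet_Icc]
      exact integrableOn_const measure_Icc_lt_top.ne
    calc |∫ u, (h u - A u) * w l u| ≤ ∫ u, ‖(h u - A u) * w l u‖ := by
          rw [← Real.norm_eq_abs]; exact norm_integral_le_integral_norm _
      _ ≤ ∫ u, Set.indicator (Icc (-(M+1)) (M+1)) (fun _ => 2*η) u :=
          integral_mono (integrable_mul_bdd hsubint ((hwm l).aestronglyMeasurable)
            (hwb l)).norm hrhsint hb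
      _ = (2*η) * (2*(M+1)) := by
          rw [integral_indicator measurableSet_Icc, setIntegral_const, Real.volume_real_Icc,
            smul_eq_mul]
          rw [max_eq_left (by linarith)]
          ring
      _ = η * (4*(M+1)) := by ring
      _ ≤ η * (4*(M+2)) := mul_le_mul_of_nonneg_left (by linarith) (le_of_lt hηpos)
      _ = ε / 4 := by
          have hM2 : M + 2 ≠ 0 := by positivity
          rw [hη]; field_simp; ring
  -- Fubini
  have hQmeas : ∀ l, Measurable (fun p : ℝ × ℝ =>
      if p.1 < p.2 ∧ p.2 ≤ p.1 + δ then h p.2 * w l p.1 else 0) := fun l =>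
    Measurable.ite ((measurableSet_lt measurable_fst measurable_snd).inter
      (measurableSet_le measurable_snd (measurable_fst.add_const δ)))
      ((hcont.measurable.comp measurable_snd).mul ((hwm l).comp measurable_fst)) measurable_const
  have hQint : ∀ l, Integrable (fun p : ℝ × ℝ =>
      if p.1 < p.2 ∧ p.2 ≤ p.1 + δ then h p.2 * w l p.1 else 0) (volume.prod volume) := by
    intro l
    refine Integrable.mono'
      (g := Set.indicator ((Icc (-(M+1)) (M+1)) ×ˢ (Icc (-M) M)) (fun _ => Ch * 2))
      ?_ ((hQmeas l).aestronglyMeasurable) (ae_of_all _ (fun p => ?_))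
    · rw [integrable_indicator_iff (measurableSet_Icc.prod measurableSet_Icc)]
      refine integrableOn_const ?_
      rw [Measure.prod_prod]
      exact (ENNReal.mul_lt_top measure_Icc_lt_top measure_Icc_lt_top).ne
    · by_cases hp : p.1 < p.2 ∧ p.2 ≤ p.1 + δ
      · rw [if_pos hp]
        by_cases hs : h p.2 = 0
        · rw [hs, zero_mul, norm_zero]
          exact Set.indicator_nonneg (fun _ _ => by positivity) p
        · have hp2 : p.2 ∈ Icc (-M) M := by
            rw [Set.mem_Icc, ← abs_le]
            by_contra hcon
            exact hs (hh0 p.2 (lt_of_not_ge hcon))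
          have hp1 : p.1 ∈ Icc (-(M+1)) (M+1) := by
            rw [Set.mem_Icc] at hp2 ⊢
            constructor <;> [linarith [hp.2, hp2.1]; linarith [hp.1, hp2.2]]
          rw [Set.indicator_of_mem (Set.mem_prod.2 ⟨hp1, hp2⟩), Real.norm_eq_abs, abs_mul]
          exact mul_le_mul (by simpa [Real.norm_eq_abs] using hCh p.2) (hwb l p.1)
            (abs_nonneg _) hChnn
      · rw [if_neg hp, norm_zero]
        exact Set.indicator_nonneg (fun _ _ => by positivity) p
  have hswap : ∀ l, ∫ u, A u * w l u
      = δ⁻¹ * ∫ s, h s * (∫ τ in (s-δ)..s, w l τ) := by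
    intro l
    set Q : ℝ → ℝ → ℝ := fun u s => if u < s ∧ s ≤ u + δ then h s * w l u else 0 with hQ
    have h1 : ∀ u, A u * w l u = δ⁻¹ * ∫ s, Q u s := by
      intro u
      have e1 : ∀ s, Q u s = (Ioc u (u+δ)).indicator (fun s => h s * w l u) s := by
        intro s; simp only [hQ, Set.indicator_apply, Set.mem_Ioc]
      have e2 : ∫ s, Q u s = ∫ s in Ioc u (u+δ), h s * w l u := by
        simp only [e1]; rw [integral_indicator measurableSet_Ioc]
      rw [e2, integral_mul_const, hA]
      simp only
      rw [intervalIntegral.integral_of_le (by linarith : u ≤ u + δ)]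
      ring
    have e3 : ∀ s, ∫ u, Q u s = h s * ∫ τ in (s-δ)..s, w l τ := by
      intro s
      have e4 : ∀ u, Q u s = (Ico (s-δ) s).indicator (fun u => h s * w l u) u := by
        intro u
        simp only [hQ, Set.indicator_apply, Set.mem_Ico]
        refine if_congr ?_ rfl rfl
        constructor
        · rintro ⟨hc1, hc2⟩; exact ⟨by linarith, hc1⟩
        · rintro ⟨hc1, hc2⟩; exact ⟨hc2, by linarith⟩
      simp only [e4]
      rw [integral_indicator measurableSet_Ico, integral_const_mul]
      congr 1
      rw [intervalIntegral.integral_of_le (by linarith : s - δ ≤ s)]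
      rw [integral_Ico_eq_integral_Ioo, integral_Ioc_eq_integral_Ioo]
    calc ∫ u, A u * w l u = ∫ u, δ⁻¹ * ∫ s, Q u s := by simp only [h1]
      _ = δ⁻¹ * ∫ u, ∫ s, Q u s := integral_const_mul _ _
      _ = δ⁻¹ * ∫ s, ∫ u, Q u s := by rw [integral_integral_swap (hQint l)]
      _ = δ⁻¹ * ∫ s, h s * ∫ τ in (s-δ)..s, w l τ := by simp only [e3]
  have hWdcont : ∀ l, Continuous (fun s => ∫ τ in (s-δ)..s, w l τ) := by
    intro l
    have hP : Continuous (fun x => ∫ τ in (0:ℝ)..x, w l τ) :=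
      intervalIntegral.continuous_primitive (f := w l) (μ := volume) (hwint l) 0
    have he : ∀ s : ℝ, (∫ τ in (0:ℝ)..s, w l τ) - (∫ τ in (0:ℝ)..(s-δ), w l τ)
        = ∫ τ in (s-δ)..s, w l τ :=
      fun s => intervalIntegral.integral_interval_sub_left (hwint l 0 s) (hwint l 0 (s-δ))
    exact (hP.sub (hP.comp (continuous_id.sub continuous_const))).congr (fun s => he s)
  have hconv : Tendsto (fun l => ∫ s, h s * (∫ τ in (s-δ)..s, w l τ)) atTop (𝓝 0) := by
    have hbd : ∀ l, ∀ᵐ s : ℝ, ‖h s * (∫ τ in (s-δ)..s, w l τ)‖ ≤ |h s| * (2*δ) := by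
      intro l
      refine ae_of_all _ (fun s => ?_)
      rw [Real.norm_eq_abs, abs_mul]
      refine mul_le_mul_of_nonneg_left ?_ (abs_nonneg _)
      have hb := intervalIntegral.norm_integral_le_of_norm_le_const
        (C := 2) (f := w l) (a := s - δ) (b := s)
        (fun x _ => by simpa [Real.norm_eq_abs] using hwb l x)
      rw [show s - (s - δ) = δ by ring, abs_of_pos hδpos] at hb
      simpa [Real.norm_eq_abs] using hb
    have := tendsto_integral_of_dominated_convergence (bound := fun s => |h s| * (2*δ))
      (F := fun l s => h s * (∫ τ in (s-δ)..s, w l τ)) (f := fun _ => (0:ℝ))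
      (fun l => (hcont.mul (hWdcont l)).aestronglyMeasurable)
      (hint.abs.mul_const _) hbd
      (ae_of_all _ (fun s => by simpa using (tendsto_const_nhds (x := h s)).mul (hW δ hδpos s)))
    simpa using this
  have hconv2 : Tendsto (fun l => ∫ u, A u * w l u) atTop (𝓝 0) := by
    have h0 : Tendsto (fun l => δ⁻¹ * ∫ s, h s * (∫ τ in (s-δ)..s, w l τ)) atTop (𝓝 (δ⁻¹ * 0)) :=
      hconv.const_mul _
    rw [mul_zero] at h0
    exact h0.congr (fun l => (hswap l).symm)
  have hev := (Metric.tendsto_nhds.1 hconv2) (ε/2) (by positivity)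
  filter_upwards [hev] with l hl
  rw [Real.dist_0_eq_abs] at hl ⊢
  have hsplit : ∫ u, h u * w l u = (∫ u, (h u - A u) * w l u) + ∫ u, A u * w l u := by
    rw [← integral_add
      (integrable_mul_bdd hsubint ((hwm l).aestronglyMeasurable) (hwb l))
      (integrable_mul_bdd hAint ((hwm l).aestronglyMeasurable) (hwb l))]
    congr 1; funext u; ring
  rw [hsplit]
  calc |(∫ u, (h u - A u) * w l u) + ∫ u, A u * w l u|
      ≤ |∫ u, (h u - A u) * w l u| + |∫ u, A u * w l u| := abs_add_le _ _
    _ < ε/4 + ε/2 := add_lt_add_of_le_of_lt (key1 l) hl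
    _ < ε := by linarith

lemma key_weak (w : ℕ → ℝ → ℝ) (hwm : ∀ l, Measurable (w l)) (hwb : ∀ l t, |w l t| ≤ 2)
    (hW : ∀ δ : ℝ, 0 < δ → ∀ s : ℝ, Tendsto (fun l => ∫ τ in (s - δ)..s, w l τ) atTop (𝓝 0))
    {g : ℝ → ℝ} (hg : Integrable g) :
    Tendsto (fun l => ∫ tt, g tt * w l tt) atTop (𝓝 0) := by
  refine Metric.tendsto_nhds.2 (fun ε hε => ?_)
  obtain ⟨h, hsupp, hdist, hcont, hhint⟩ :=
    hg.exists_hasCompactSupport_integral_sub_le (show (0:ℝ) < ε/8 by positivity)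
  have hbase := key_weak_cont w hwm hwb hW hcont hsupp
  have hev := (Metric.tendsto_nhds.1 hbase) (ε/2) (by positivity)
  filter_upwards [hev] with l hl
  rw [Real.dist_0_eq_abs] at hl ⊢
  have hsub : Integrable (fun x => g x - h x) := hg.sub hhint
  have h1 : ∫ x, g x * w l x = (∫ x, (g x - h x) * w l x) + ∫ x, h x * w l x := by
    rw [← integral_add
      (integrable_mul_bdd hsub ((hwm l).aestronglyMeasurable) (hwb l))
      (integrable_mul_bdd hhint ((hwm l).aestronglyMeasurable) (hwb l))]
    congr 1; funext u; ring
  have h2 : |∫ x, (g x - h x) * w l x| ≤ 2 * (ε/8) := by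
    calc |∫ x, (g x - h x) * w l x| ≤ ∫ x, ‖(g x - h x) * w l x‖ := by
          rw [← Real.norm_eq_abs]; exact norm_integral_le_integral_norm _
      _ ≤ ∫ x, 2 * ‖g x - h x‖ := by
          refine integral_mono (integrable_mul_bdd hsub ((hwm l).aestronglyMeasurable)
            (hwb l)).norm (hsub.norm.const_mul 2) (fun x => ?_)
          rw [Real.norm_eq_abs, Real.norm_eq_abs, abs_mul]
          calc |g x - h x| * |w l x| ≤ |g x - h x| * 2 :=
                mul_le_mul_of_nonneg_left (hwb l x) (abs_nonneg _)
            _ = 2 * |g x - h x| := mul_comm _ _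
      _ = 2 * ∫ x, ‖g x - h x‖ := integral_const_mul _ _
      _ ≤ 2 * (ε/8) := by linarith [hdist]
  rw [h1]
  calc |(∫ x, (g x - h x) * w l x) + ∫ x, h x * w l x|
      ≤ |∫ x, (g x - h x) * w l x| + |∫ x, h x * w l x| := abs_add_le _ _
    _ < 2*(ε/8) + ε/2 := add_lt_add_of_le_of_lt h2 hl
    _ < ε := by linarith

end Helpers


/-- Lemma 2: existence of limiting trajectories. If each f_i is uniformly bounded,
t_k → ∞ and (x_k, σ_k) are trajectories staying in a compact set K ⊆ 𝒳 on
[t_k − k, t_k + k] ⊆ [t₀(x_k), t_f(x_k)), then some subsequence of the time-translates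
converges (uniformly on compacts) to a continuous x̄ : ℝ → 𝒳, while the translated
switching signals weakly converge to a control ū ∈ 𝒰. -/
theorem exists_limiting_trajectory {n N : ℕ} (𝒳 : Set (E n)) (hXopen : IsOpen 𝒳)
    (hX0 : (0 : E n) ∈ 𝒳) (f : ℝ → E n → Fin N → E n)
    (hf_car : ∀ i, Caratheodory 𝒳 fun t ξ => f t ξ i)
    (hf_bdd : ∀ i, UnifBounded 𝒳 fun t ξ => f t ξ i)
    (t : ℕ → ℝ) (ht_pos : ∀ k, 0 < t k) (ht : Tendsto t atTop atTop)
    (T : ℕ → Sol 𝒳 f) (hT_max : ∀ k, (T k).IsMaximal)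
    (K : Set (E n)) (hK : IsCompact K) (hKX : K ⊆ 𝒳)
    (hdom : ∀ k : ℕ, (T k).t0 ≤ t k - k ∧ ((t k + k : ℝ) : EReal) < (T k).tf)
    (hmem : ∀ k : ℕ, ∀ s : ℝ, |s| ≤ (k : ℝ) → (T k).x (t k + s) ∈ K) :
    ∃ (φ : ℕ → ℕ) (xb : ℝ → E n) (ub : ℝ → Fin N → ℝ),
      StrictMono φ ∧ Continuous xb ∧ (∀ s, xb s ∈ 𝒳) ∧ IsControl ub ∧
      (∀ Tc : ℝ, 0 < Tc → TendstoUniformlyOn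
        (fun l s => (T (φ l)).x (t (φ l) + s)) xb atTop (Icc (-Tc) Tc)) ∧
      WeakConv (fun l s => ctrlOfSwitch (T (φ l)).σ (t (φ l) + s)) ub := by
  classical
  rcases N with _ | N'
  · exact ((T 0).σ 0).elim0
  -- notation
  set y : ℕ → ℝ → E n := fun k s => (T k).x (t k + s) with hy
  set u : ℕ → ℝ → Fin (N'+1) → ℝ := fun k s => ctrlOfSwitch (T k).σ (t k + s) with hu
  have huval : ∀ k s i, u k s i = if i = (T k).σ (t k + s) then 1 else 0 := fun k s i => rfl
  have hσmeas : ∀ k, Measurable (T k).σ := fun k => ((T k).switching).measurable'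
  have humeas : ∀ k i, Measurable (fun s => u k s i) := by
    intro k i
    have h1 : Measurable (fun s : ℝ => (T k).σ (t k + s)) :=
      (hσmeas k).comp (measurable_const.add measurable_id)
    simp only [huval]
    exact Measurable.ite (by
      have := h1 (MeasurableSet.singleton i)
      convert this using 1
      ext s
      simp [eq_comm]) measurable_const measurable_const
  have hu01 : ∀ k s i, 0 ≤ u k s i ∧ u k s i ≤ 1 := by
    intro k s i; rw [huval]; split <;> norm_num
  have huIcc : ∀ k i (a b : ℝ), IntervalIntegrable (fun s => u k s i) volume a b := by
    intro k i a b
    constructor <;>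
    · refine Integrable.mono' (g := fun _ : ℝ => (1:ℝ))
        (integrableOn_const measure_Ioc_lt_top.ne)
        ((humeas k i).aestronglyMeasurable.restrict) ?_
      refine ae_of_all _ fun s => ?_
      rw [Real.norm_eq_abs, abs_of_nonneg (hu01 k s i).1]
      exact (hu01 k s i).2
  set F : ℕ → Fin (N'+1) → ℝ → ℝ := fun k i s => ∫ τ in (0:ℝ)..s, u k τ i with hF
  have hFadd : ∀ k i (a b : ℝ), F k i b - F k i a = ∫ τ in a..b, u k τ i := by
    intro k i a b
    simp only [hF]
    rw [← intervalIntegral.integral_add_adjacent_intervals (huIcc k i 0 a) (huIcc k i a b)]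
    ring
  have hFmono01 : ∀ k i (a b : ℝ), a ≤ b →
      0 ≤ F k i b - F k i a ∧ F k i b - F k i a ≤ b - a := by
    intro k i a b hab
    rw [hFadd]
    constructor
    · exact intervalIntegral.integral_nonneg hab (fun τ _ => (hu01 k τ i).1)
    · calc ∫ τ in a..b, u k τ i ≤ ∫ τ in a..b, (1:ℝ) :=
            intervalIntegral.integral_mono_on hab (huIcc k i a b) intervalIntegrable_const
              (fun τ _ => (hu01 k τ i).2)
        _ = b - a := by simp
  have hFsum : ∀ k (a b : ℝ), a ≤ b → ∑ i, (F k i b - F k i a) = b - a := by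
    intro k a b hab
    rw [Finset.sum_congr rfl (fun i _ => hFadd k i a b),
      ← intervalIntegral.integral_finset_sum (fun i _ => huIcc k i a b)]
    have : ∀ τ, ∑ i, u k τ i = 1 := by
      intro τ
      simp only [huval]
      simp
    rw [intervalIntegral.integral_congr (fun τ _ => this τ)]
    simp
  have hF0 : ∀ k i, F k i 0 = 0 := by
    intro k i; simp only [hF]; exact intervalIntegral.integral_same
  have hFbound : ∀ k i (q : ℝ), |F k i q| ≤ |q| := by
    intro k i q
    rcases le_total 0 q with hq | hq
    · have h1 := hFmono01 k i 0 q hq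
      rw [hF0] at h1
      rw [abs_of_nonneg (by linarith [h1.1]), abs_of_nonneg hq]
      linarith [h1.2]
    · have h1 := hFmono01 k i q 0 hq
      rw [hF0] at h1
      rw [abs_of_nonpos (by linarith [h1.1]), abs_of_nonpos hq]
      linarith [h1.2]
  -- uniform bound on the vector fields
  have hbd : ∃ C : ℝ, 0 ≤ C ∧ ∀ k : ℕ, ∀ a b : ℝ, |a| ≤ (k:ℝ) → |b| ≤ (k:ℝ) → a ≤ b →
      ‖y k b - y k a‖ ≤ C * (b - a) := by
    have h1 : ∀ i : Fin (N'+1), ∃ J', J' ⊆ Ici (0:ℝ) ∧ volume (Ici (0:ℝ) \ J') = 0 ∧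
        ∃ C0 : ℝ, ∀ τ ∈ J', ∀ ξ ∈ K, ‖f τ ξ i‖ ≤ C0 := by
      intro i
      obtain ⟨J', hsub, hnull, hbdK⟩ := hf_bdd i
      obtain ⟨C0, hC0⟩ := hbdK K hK hKX
      exact ⟨J', hsub, hnull, C0, hC0⟩
    choose J hJsub hJnull C₀ hC₀ using h1
    set C := ∑ i, |C₀ i| with hCdef
    have hCnn : 0 ≤ C := Finset.sum_nonneg (fun i _ => abs_nonneg _)
    have hCi : ∀ i, C₀ i ≤ C := fun i => le_trans (le_abs_self _)
      (Finset.single_le_sum (f := fun j => |C₀ j|) (fun _ _ => abs_nonneg _) (Finset.mem_univ i))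
    refine ⟨C, hCnn, ?_⟩
    intro k a b ha hb hab
    have h0k : (0:ℝ) ≤ (k:ℝ) := Nat.cast_nonneg k
    have ha' := abs_le.1 ha
    have hb' := abs_le.1 hb
    have ht0 : (T k).t0 ≤ t k + a := by
      have h2 := (hdom k).1
      linarith [ha'.1]
    have hab' : t k + a ≤ t k + b := by linarith
    have htf : ((t k + b : ℝ) : EReal) < (T k).tf := by
      refine lt_of_le_of_lt ?_ (hdom k).2
      exact EReal.coe_le_coe_iff.2 (by linarith [hb'.2])
    have hsol := (T k).sol (t k + a) (t k + b) ht0 hab' htf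
    have hy2 : y k b - y k a = ∫ τ in (t k + a)..(t k + b), f τ ((T k).x τ) ((T k).σ τ) := by
      simp only [hy]
      rw [hsol, add_sub_cancel_left]
    rw [hy2]
    have hae : ∀ᵐ τ : ℝ, τ ∈ Set.uIoc (t k + a) (t k + b) →
        ‖f τ ((T k).x τ) ((T k).σ τ)‖ ≤ C := by
      have hnull2 : volume (⋃ i, Ici (0:ℝ) \ J i) = 0 :=
        measure_iUnion_null (fun i => hJnull i)
      have hae0 : ∀ᵐ τ : ℝ, τ ∉ ⋃ i, Ici (0:ℝ) \ J i :=
        (MeasureTheory.measure_eq_zero_iff_ae_notMem).1 hnull2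
      filter_upwards [hae0] with τ hτ hmemτ
      rw [Set.uIoc_of_le hab', Set.mem_Ioc] at hmemτ
      have hτ0 : τ ∈ Ici (0:ℝ) := by
        have h2 := (hdom k).1
        have h3 := (T k).t0_nonneg
        rw [Set.mem_Ici]
        linarith [hmemτ.1]
      have hτJ : ∀ i, τ ∈ J i := by
        intro i
        by_contra hno
        exact hτ (Set.mem_iUnion.2 ⟨i, ⟨hτ0, hno⟩⟩)
      have hxK : (T k).x τ ∈ K := by
        have h2 := hmem k (τ - t k) (by
          rw [abs_le]
          constructor
          · linarith [hmemτ.1]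
          · linarith [hmemτ.2])
        rw [add_sub_cancel] at h2
        exact h2
      calc ‖f τ ((T k).x τ) ((T k).σ τ)‖ ≤ C₀ ((T k).σ τ) :=
            hC₀ ((T k).σ τ) τ (hτJ _) _ hxK
        _ ≤ C := hCi _
    have h4 := intervalIntegral.norm_integral_le_of_norm_le_const_ae hae
    rw [abs_of_nonneg (by linarith : (0:ℝ) ≤ t k + b - (t k + a))] at h4
    calc ‖∫ τ in (t k + a)..(t k + b), f τ ((T k).x τ) ((T k).σ τ)‖
        ≤ C * (t k + b - (t k + a)) := h4
      _ = C * (b - a) := by ring_nf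
  obtain ⟨C, hCnn, hC⟩ := hbd
  -- compactness extraction
  set yc : ℕ → ℚ → E n := fun k q => y k (max (-(k:ℝ)) (min (k:ℝ) q)) with hyc
  have hclamp : ∀ (k : ℕ) (q : ℚ), |max (-(k:ℝ)) (min (k:ℝ) q)| ≤ (k:ℝ) := by
    intro k q
    rw [abs_le]
    constructor
    · exact le_max_left _ _
    · exact max_le (neg_le_self (Nat.cast_nonneg k)) (min_le_left _ _)
  have hycK : ∀ k q, yc k q ∈ K := fun k q => hmem k _ (hclamp k q)
  set Z : ℕ → (ℚ → E n) × (ℚ → Fin (N'+1) → ℝ) :=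
    fun k => (fun q => yc k q, fun q i => F k i q) with hZ
  have hScomp : IsCompact ((univ.pi fun _ : ℚ => K) ×ˢ
      (univ.pi fun q : ℚ => univ.pi fun _ : Fin (N'+1) => Icc (-|(q:ℝ)|) |(q:ℝ)|)) :=
    IsCompact.prod (isCompact_univ_pi fun _ => hK)
      (isCompact_univ_pi fun q => isCompact_univ_pi fun _ => isCompact_Icc)
  have hZS : ∀ k, Z k ∈ (univ.pi fun _ : ℚ => K) ×ˢ
      (univ.pi fun q : ℚ => univ.pi fun _ : Fin (N'+1) => Icc (-|(q:ℝ)|) |(q:ℝ)|) := by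
    intro k
    refine Set.mem_prod.2 ⟨Set.mem_univ_pi.2 (fun q => hycK k q), Set.mem_univ_pi.2 (fun q =>
      Set.mem_univ_pi.2 (fun i => ?_))⟩
    rw [Set.mem_Icc, ← abs_le]
    exact hFbound k i q
  obtain ⟨P, hPS, φ, hφmono, hφtend⟩ := hScomp.tendsto_subseq hZS
  have hφutop : Tendsto (fun l => ((φ l : ℕ) : ℝ)) atTop atTop :=
    tendsto_natCast_atTop_atTop.comp hφmono.tendsto_atTop
  have hy_q : ∀ q : ℚ, Tendsto (fun l => yc (φ l) q) atTop (𝓝 (P.1 q)) := by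
    intro q
    have h1 : Tendsto (fun l => (Z (φ l)).1) atTop (𝓝 P.1) :=
      (continuousAt_fst.tendsto).comp hφtend
    exact (tendsto_pi_nhds.1 h1) q
  have hF_q : ∀ (q : ℚ) (i : Fin (N'+1)), Tendsto (fun l => F (φ l) i q) atTop (𝓝 (P.2 q i)) := by
    intro q i
    have h1 : Tendsto (fun l => (Z (φ l)).2) atTop (𝓝 P.2) :=
      (continuousAt_snd.tendsto).comp hφtend
    exact (tendsto_pi_nhds.1 ((tendsto_pi_nhds.1 h1) q)) i
  have hy_q' : ∀ q : ℚ, Tendsto (fun l => y (φ l) (q:ℝ)) atTop (𝓝 (P.1 q)) := by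
    intro q
    refine (hy_q q).congr' ?_
    filter_upwards [hφutop.eventually_ge_atTop |(q:ℝ)|] with l hl
    have h1 := (abs_le.1 hl)
    simp only [hyc]
    congr 1
    rw [min_eq_right h1.2, max_eq_right (by linarith [h1.1])]
  -- pointwise limits everywhere
  have hxlim : ∀ s : ℝ, ∃ p, Tendsto (fun l => y (φ l) s) atTop (𝓝 p) := by
    intro s
    refine exists_lim_of_equilip _ C hCnn s ?_ (fun q => ⟨P.1 q, hy_q' q⟩)
    filter_upwards [hφutop.eventually_ge_atTop (|s| + 1)] with l hl
    intro b hb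
    have hbb : |b| ≤ (φ l : ℝ) := by
      calc |b| ≤ |s| + |b - s| := by
            have := abs_sub_abs_le_abs_sub b s; linarith
        _ ≤ |s| + 1 := by linarith
        _ ≤ (φ l : ℝ) := hl
    have hss : |s| ≤ (φ l : ℝ) := by linarith [abs_nonneg (b - s), hl]
    rcases le_total b s with hbs | hbs
    · rw [dist_eq_norm, norm_sub_rev]
      have h2 := hC (φ l) b s hbb hss hbs
      rw [abs_of_nonpos (by linarith), neg_sub]
      exact h2
    · rw [dist_eq_norm]
      have h2 := hC (φ l) s b hss hbb hbs
      rw [abs_of_nonneg (by linarith)]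
      exact h2
  choose xb hxb using hxlim
  have hFlim : ∀ (i : Fin (N'+1)) (s : ℝ), ∃ p, Tendsto (fun l => F (φ l) i s) atTop (𝓝 p) := by
    intro i s
    refine exists_lim_of_equilip _ 1 zero_le_one s ?_ (fun q => ⟨P.2 q i, hF_q q i⟩)
    refine Eventually.of_forall (fun l => fun b hb => ?_)
    rw [one_mul, Real.dist_eq]
    rcases le_total b s with hbs | hbs
    · have h2 := hFmono01 (φ l) i b s hbs
      rw [abs_of_nonpos (by linarith [h2.1]), abs_of_nonpos (by linarith)]
      linarith [h2.2]
    · have h2 := hFmono01 (φ l) i s b hbs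
      rw [abs_of_nonneg (by linarith [h2.1]), abs_of_nonneg (by linarith)]
      linarith [h2.2]
  choose Fb hFb using hFlim
  -- properties of xb
  have hxbK : ∀ s, xb s ∈ K := by
    intro s
    refine hK.isClosed.mem_of_tendsto (hxb s) ?_
    filter_upwards [hφutop.eventually_ge_atTop |s|] with l hl using hmem (φ l) s hl
  have hxlipb : ∀ a b : ℝ, a ≤ b → ‖xb b - xb a‖ ≤ C * (b - a) := by
    intro a b hab
    refine le_of_tendsto ((hxb b).sub (hxb a)).norm ?_
    filter_upwards [hφutop.eventually_ge_atTop (max |a| |b|)] with l hl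
    exact hC (φ l) a b (le_trans (le_max_left _ _) hl) (le_trans (le_max_right _ _) hl) hab
  have hxbcont : Continuous xb := by
    refine (LipschitzWith.of_dist_le_mul (K := C.toNNReal) (fun a b => ?_)).continuous
    rw [Real.coe_toNNReal C hCnn, dist_eq_norm, Real.dist_eq]
    rcases le_total a b with hab | hab
    · rw [norm_sub_rev, abs_of_nonpos (by linarith), neg_sub]
      exact hxlipb a b hab
    · rw [abs_of_nonneg (by linarith)]
      exact hxlipb b a hab
  -- uniform convergence on compacts
  have huc : ∀ Tc : ℝ, 0 < Tc →
      TendstoUniformlyOn (fun l s => y (φ l) s) xb atTop (Icc (-Tc) Tc) := by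
    intro Tc hTc
    refine tendstoUniformlyOn_of_equilip _ _ C Tc hCnn ?_ (fun s _ => hxb s)
    filter_upwards [hφutop.eventually_ge_atTop Tc] with l hl
    intro a ha b hb
    have haa : |a| ≤ (φ l : ℝ) := le_trans (abs_le.2 ⟨ha.1, ha.2⟩) hl
    have hbb : |b| ≤ (φ l : ℝ) := le_trans (abs_le.2 ⟨hb.1, hb.2⟩) hl
    rw [Real.dist_eq, dist_eq_norm]
    rcases le_total a b with hab | hab
    · rw [norm_sub_rev, abs_of_nonpos (by linarith), neg_sub]
      exact hC (φ l) a b haa hbb hab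
    · rw [abs_of_nonneg (by linarith)]
      exact hC (φ l) b a hbb haa hab
  -- properties of Fb
  have hFbmono : ∀ i, Monotone (Fb i) := by
    intro i a b hab
    refine le_of_tendsto_of_tendsto' (hFb i a) (hFb i b) (fun l => ?_)
    linarith [(hFmono01 (φ l) i a b hab).1]
  have hFblip : ∀ i, ∀ a b : ℝ, a ≤ b → Fb i b - Fb i a ≤ b - a := by
    intro i a b hab
    refine le_of_tendsto ((hFb i b).sub (hFb i a)) ?_
    exact Eventually.of_forall (fun l => (hFmono01 (φ l) i a b hab).2)
  have hFbsum : ∀ a b : ℝ, a ≤ b → ∑ i, (Fb i b - Fb i a) = b - a := by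
    intro a b hab
    have h1 : Tendsto (fun l => ∑ i, (F (φ l) i b - F (φ l) i a)) atTop
        (𝓝 (∑ i, (Fb i b - Fb i a))) :=
      tendsto_finset_sum _ (fun i _ => (hFb i b).sub (hFb i a))
    have h2 : Tendsto (fun l => ∑ i, (F (φ l) i b - F (φ l) i a)) atTop (𝓝 (b - a)) := by
      refine tendsto_const_nhds.congr (fun l => ?_)
      exact (hFsum (φ l) a b hab).symm
    exact tendsto_nhds_unique h1 h2
  obtain ⟨ub, hubmeas, hubsimplex, hubint⟩ := exists_density Fb hFbmono hFblip hFbsum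
  have hub01 : ∀ s i, 0 ≤ ub s i ∧ ub s i ≤ 1 := by
    intro s i
    obtain ⟨h1, h2⟩ := hubsimplex s
    refine ⟨h1 i, ?_⟩
    calc ub s i ≤ ∑ j, ub s j := Finset.single_le_sum (fun j _ => h1 j) (Finset.mem_univ i)
      _ = 1 := h2
  have hubimeas : ∀ i, Measurable (fun s => ub s i) :=
    fun i => (measurable_pi_apply i).comp hubmeas
  have hubIcc : ∀ i (a b : ℝ), IntervalIntegrable (fun s => ub s i) volume a b := by
    intro i a b
    constructor <;>
    · refine Integrable.mono' (g := fun _ : ℝ => (1:ℝ))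
        (integrableOn_const measure_Ioc_lt_top.ne)
        ((hubimeas i).aestronglyMeasurable.restrict) ?_
      refine ae_of_all _ fun s => ?_
      rw [Real.norm_eq_abs, abs_of_nonneg (hub01 s i).1]
      exact (hub01 s i).2
  have hFb0 : ∀ i, Fb i 0 = 0 := by
    intro i
    refine tendsto_nhds_unique (hFb i 0) ?_
    exact tendsto_const_nhds.congr (fun l => (hF0 (φ l) i).symm)
  have hubFb : ∀ i (a b : ℝ), a ≤ b → ∫ τ in a..b, ub τ i = Fb i b - Fb i a := by
    intro i a b hab
    rw [intervalIntegral.integral_of_le hab]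
    exact hubint i a b hab
  -- weak convergence
  have hwconv : WeakConv (fun l s => u (φ l) s) ub := by
    intro g hg
    have hgi : ∀ i, Integrable (fun s => g s i) := by
      intro i
      exact (ContinuousLinearMap.proj (R := ℝ) (φ := fun _ : Fin (N'+1) => ℝ) i).integrable_comp hg
    have hsplit1 : ∀ l, ∫ s, ∑ i, g s i * u (φ l) s i = ∑ i, ∫ s, g s i * u (φ l) s i := by
      intro l
      refine integral_finset_sum _ (fun i _ => ?_)
      refine integrable_mul_bdd (hgi i) ((humeas (φ l) i).aestronglyMeasurable) (fun x => ?_)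
      rw [abs_of_nonneg (hu01 (φ l) x i).1]; linarith [(hu01 (φ l) x i).2]
    have hsplit2 : ∫ s, ∑ i, g s i * ub s i = ∑ i, ∫ s, g s i * ub s i := by
      refine integral_finset_sum _ (fun i _ => ?_)
      refine integrable_mul_bdd (hgi i) ((hubimeas i).aestronglyMeasurable) (fun x => ?_)
      rw [abs_of_nonneg (hub01 x i).1]; linarith [(hub01 x i).2]
    simp only [hsplit1, hsplit2]
    refine tendsto_finset_sum _ (fun i _ => ?_)
    -- per component
    set w : ℕ → ℝ → ℝ := fun l τ => u (φ l) τ i - ub τ i with hw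
    have hwm : ∀ l, Measurable (w l) := fun l => (humeas (φ l) i).sub (hubimeas i)
    have hwb : ∀ l τ, |w l τ| ≤ 2 := by
      intro l τ
      rw [hw]
      have h1 := hu01 (φ l) τ i
      have h2 := hub01 τ i
      rw [abs_le]; constructor <;> simp only <;> [linarith [h1.1, h2.2]; linarith [h1.2, h2.1]]
    have hWint : ∀ δ : ℝ, 0 < δ → ∀ s : ℝ,
        Tendsto (fun l => ∫ τ in (s - δ)..s, w l τ) atTop (𝓝 0) := by
      intro δ hδ s
      have hab : s - δ ≤ s := by linarith
      have heq : ∀ l, ∫ τ in (s - δ)..s, w l τ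
          = (F (φ l) i s - F (φ l) i (s - δ)) - (Fb i s - Fb i (s - δ)) := by
        intro l
        rw [hw]
        rw [intervalIntegral.integral_sub (huIcc (φ l) i _ _) (hubIcc i _ _)]
        rw [← hFadd (φ l) i (s - δ) s, hubFb i (s - δ) s hab]
      have h1 : Tendsto (fun l => (F (φ l) i s - F (φ l) i (s - δ)) - (Fb i s - Fb i (s - δ)))
          atTop (𝓝 ((Fb i s - Fb i (s - δ)) - (Fb i s - Fb i (s - δ)))) :=
        ((hFb i s).sub (hFb i (s - δ))).sub tendsto_const_nhds
      rw [sub_self] at h1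
      exact h1.congr (fun l => (heq l).symm)
    have hkey := key_weak w hwm hwb hWint (hgi i)
    have hgint1 : ∀ l, Integrable (fun s => g s i * u (φ l) s i) := by
      intro l
      refine integrable_mul_bdd (hgi i) ((humeas (φ l) i).aestronglyMeasurable) (fun x => ?_)
      rw [abs_of_nonneg (hu01 (φ l) x i).1]; linarith [(hu01 (φ l) x i).2]
    have hgint2 : Integrable (fun s => g s i * ub s i) := by
      refine integrable_mul_bdd (hgi i) ((hubimeas i).aestronglyMeasurable) (fun x => ?_)
      rw [abs_of_nonneg (hub01 x i).1]; linarith [(hub01 x i).2]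
    have heq2 : ∀ l, ∫ s, g s i * u (φ l) s i
        = (∫ s, g s i * ub s i) + ∫ s, g s i * w l s := by
      intro l
      rw [← integral_add hgint2 (integrable_mul_bdd (hgi i)
        ((hwm l).aestronglyMeasurable) (fun x => hwb l x))]
      congr 1
      funext s
      rw [hw]
      ring
    have h3 : Tendsto (fun l => (∫ s, g s i * ub s i) + ∫ s, g s i * w l s) atTop
        (𝓝 ((∫ s, g s i * ub s i) + 0)) := tendsto_const_nhds.add hkey
    rw [add_zero] at h3
    exact h3.congr (fun l => (heq2 l).symm)
  exact ⟨φ, xb, ub, hφmono, hxbcont, (fun s => hKX (hxbK s)), ⟨hubmeas, hubsimplex⟩, huc, hwconv⟩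
end
end

section
/- Let 𝒯 be a family of trajectories of the switched system ẋ = f(t,x,σ(t)) that is invariant with respect to a closed covering χ = {χ_i}_{i∈I} of ℝ^n. If (x̄, ū) is a limiting trajectory of 𝒯, then ū(t) ∈ U_{x̄(t)} for almost all t ∈ ℝ. -/
open MeasureTheory Filter Set Topology

noncomputable section

open SwitchedSys Filter Set MeasureTheory


private lemma mem_hull_of_support {N : ℕ} (S : Set (Fin N → ℝ)) (μ : Fin N → ℝ)
    (hμ : μ ∈ simplexU N) (h : ∀ i, μ i ≠ 0 → stdVec N i ∈ S) :
    μ ∈ convexHull ℝ S := by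
  classical
  obtain ⟨hpos, hsum⟩ := hμ
  set s : Finset (Fin N) := Finset.univ.filter fun i => μ i ≠ 0 with hs
  have hsum' : ∑ i ∈ s, μ i = 1 := by
    rw [hs, Finset.sum_filter_ne_zero, hsum]
  have hrepr : s.centerMass μ (fun i => stdVec N i) = μ := by
    rw [Finset.centerMass_eq_of_sum_1 _ _ hsum']
    funext j
    rw [Finset.sum_apply]
    have : ∀ i ∈ s, (μ i • stdVec N i) j = if i = j then μ j else 0 := by
      intro i _
      simp only [stdVec, Pi.smul_apply, smul_eq_mul]
      by_cases hij : i = j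
      · simp [hij]
      · simp [hij, Ne.symm hij]
    rw [Finset.sum_congr rfl this, Finset.sum_ite_eq' s j fun _ => μ j]
    by_cases hj : j ∈ s
    · simp [hj]
    · simp only [hj, if_false]
      have : ¬ μ j ≠ 0 := fun hne => hj (by simp [hs, hne])
      simpa using (not_not.mp this).symm
  rw [← hrepr]
  exact s.centerMass_mem_convexHull (fun i _ => hpos i) (by rw [hsum']; norm_num)
    (fun i hi => h i (by simpa [hs] using hi))

/-- Lemma 4: state-dependent constraint on limiting trajectories. If 𝒯 is invariant
w.r.t. a closed covering χ of ℝⁿ and (x̄, ū) is a limiting trajectory of 𝒯, then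
ū(t) ∈ U_{x̄(t)} for almost all t ∈ ℝ. -/
theorem limiting_trajectory_constraint {n N : ℕ} (𝒳 : Set (E n)) (hXopen : IsOpen 𝒳)
    (hX0 : (0 : E n) ∈ 𝒳) (f : ℝ → E n → Fin N → E n)
    (hf_car : ∀ i, Caratheodory 𝒳 fun t ξ => f t ξ i)
    (𝒯 : Set (Sol 𝒳 f)) (hmax : ∀ T ∈ 𝒯, T.IsMaximal)
    (χ : Fin N → Set (E n)) (hχ_closed : ∀ i, IsClosed (χ i))
    (hχ_cover : (⋃ i, χ i) = Set.univ) (hinv : InvariantWrt 𝒯 χ)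
    (xb : ℝ → E n) (ub : ℝ → Fin N → ℝ) (hlim : LimitingTrajectory 𝒯 xb ub) :
    ∀ᵐ t ∂volume, ub t ∈ Uset χ (xb t) := by
    classical
  obtain ⟨hxb_cont, hxb_mem, hub_ctrl, t, T, K, ht, hT𝒯, hK, hKX, hdom, hKmem, hunif, hweak⟩ := hlim
  have key : ∀ i : Fin N, ∀ᵐ s ∂volume, xb s ∉ χ i → ub s i = 0 := by
    intro i
    have hBnull : volume {s | xb s ∉ χ i ∧ ub s i ≠ 0} = 0 := by
      apply measure_null_of_locally_null
      rintro t₀ ⟨hnotmem, -⟩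
      obtain ⟨ε, hε, hball⟩ := Metric.isOpen_iff.mp (hχ_closed i).isOpen_compl (xb t₀) hnotmem
      obtain ⟨r, hr, hcont⟩ := Metric.continuous_iff.mp hxb_cont t₀ (ε/2) (half_pos hε)
      set r' : ℝ := r / 2 with hr'
      have hr'pos : 0 < r' := half_pos hr
      set a : ℝ := t₀ - r' with ha
      set b : ℝ := t₀ + r' with hb
      set Tc : ℝ := |t₀| + r' + 1 with hTc
      have hTcpos : 0 < Tc := by positivity
      -- the test function
      set g : ℝ → Fin N → ℝ := (Icc a b).indicator (fun _ => stdVec N i) with hg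
      have hgsum : ∀ (v : ℝ → Fin N → ℝ) (s : ℝ), (∑ j, g s j * v s j)
          = (Icc a b).indicator (fun s' => v s' i) s := by
        intro v s
        by_cases hsmem : s ∈ Icc a b
        · simp only [hg, indicator_of_mem hsmem, stdVec, ite_mul, one_mul, zero_mul]
          simp [Finset.sum_ite_eq']
        · simp [hg, indicator_of_notMem hsmem]
      have hgint : Integrable g volume := by
        rw [hg, integrable_indicator_iff measurableSet_Icc]
        exact (integrableOn_const_iff).mpr (Or.inr measure_Icc_lt_top)
      -- eventually the integrals vanish
      have hzero : ∀ᶠ k in atTop, (∫ s : ℝ, ∑ j, g s j *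
          ctrlOfSwitch (T k).σ (t k + s) j) = 0 := by
        have h1 := (Metric.tendstoUniformlyOn_iff.mp (hunif Tc hTcpos)) (ε/2) (half_pos hε)
        have h2 : ∀ᶠ k : ℕ in atTop, Tc ≤ (k : ℝ) :=
          tendsto_natCast_atTop_atTop.eventually_ge_atTop Tc
        filter_upwards [h1, h2] with k hk1 hk2
        have hzero' : ∀ s ∈ Icc a b, ctrlOfSwitch (T k).σ (t k + s) i = 0 := by
          intro s hs
          have hsabs : |s| ≤ |t₀| + r' := by
            have h3 : |s - t₀| ≤ r' := by
              rw [abs_le]; constructor <;> [skip; skip] <;>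
                (simp only [mem_Icc, ha, hb] at hs; linarith [hs.1, hs.2])
            calc |s| = |t₀ + (s - t₀)| := by ring_nf
              _ ≤ |t₀| + |s - t₀| := abs_add_le _ _
              _ ≤ |t₀| + r' := by linarith
          have hsTc : s ∈ Icc (-Tc) Tc := by
            rw [mem_Icc]; rw [abs_le] at hsabs
            constructor <;> simp only [hTc] <;> linarith [hsabs.1, hsabs.2]
          have hdist1 : dist (xb s) ((T k).x (t k + s)) < ε/2 := hk1 s hsTc
          have hdist2 : dist (xb s) (xb t₀) < ε/2 := by
            apply hcont
            rw [Real.dist_eq]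
            have h3 : |s - t₀| ≤ r' := by
              rw [abs_le]; constructor <;>
                (simp only [mem_Icc, ha, hb] at hs; linarith [hs.1, hs.2])
            linarith
          have hxout : (T k).x (t k + s) ∉ χ i := by
            have : (T k).x (t k + s) ∈ Metric.ball (xb t₀) ε := by
              rw [Metric.mem_ball]
              calc dist ((T k).x (t k + s)) (xb t₀)
                  ≤ dist ((T k).x (t k + s)) (xb s) + dist (xb s) (xb t₀) := dist_triangle _ _ _
                _ < ε/2 + ε/2 := by rw [dist_comm]; exact add_lt_add hdist1 hdist2
                _ = ε := add_halves ε
            exact hball this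
          have hsk : |s| ≤ (k : ℝ) := le_trans hsabs (by simp only [hTc] at hk2; linarith)
          have habs := abs_le.mp hsk
          have hindom : (T k).InDom (t k + s) := by
            constructor
            · linarith [(hdom k).1, habs.1]
            · refine lt_of_le_of_lt ?_ (hdom k).2
              exact EReal.coe_le_coe_iff.mpr (by linarith [habs.2])
          have hne : (T k).σ (t k + s) ≠ i := by
            intro hEq
            exact hxout (hEq ▸ hinv (T k) (hT𝒯 k) (t k + s) hindom)
          simp [ctrlOfSwitch, stdVec, Ne.symm hne]
        have : (fun s : ℝ => ∑ j, g s j * ctrlOfSwitch (T k).σ (t k + s) j)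
            = fun _ => (0 : ℝ) := by
          funext s
          rw [hgsum (fun s' => ctrlOfSwitch (T k).σ (t k + s')) s]
          by_cases hsmem : s ∈ Icc a b
          · rw [indicator_of_mem hsmem]; exact hzero' s hsmem
          · exact indicator_of_notMem hsmem _
        rw [this, integral_zero]
      -- conclude the limiting integral vanishes
      have hlim0 : (∫ s : ℝ, ∑ j, g s j * ub s j) = 0 := by
        have h1 := hweak g hgint
        have h2 : Tendsto (fun _ : ℕ => (0:ℝ)) atTop
            (nhds (∫ s : ℝ, ∑ j, g s j * ub s j)) := h1.congr' hzero
        exact (tendsto_nhds_unique h2 tendsto_const_nhds)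
      have hlim1 : (∫ s in Icc a b, ub s i) = 0 := by
        rw [← integral_indicator measurableSet_Icc, ← hlim0]
        exact integral_congr_ae (Eventually.of_forall fun s => (hgsum ub s).symm)
      have hmeasi : Measurable fun s => ub s i := (measurable_pi_apply i).comp hub_ctrl.1
      have hint : Integrable (fun s => ub s i) (volume.restrict (Icc a b)) := by
        have hconst : IntegrableOn (fun _ : ℝ => (1:ℝ)) (Icc a b) volume :=
          (integrableOn_const_iff).mpr (Or.inr measure_Icc_lt_top)
        refine Integrable.mono' hconst hmeasi.aestronglyMeasurable ?_
        filter_upwards with s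
        rw [Real.norm_eq_abs, abs_of_nonneg ((hub_ctrl.2 s).1 i)]
        calc ub s i ≤ ∑ j, ub s j :=
              Finset.single_le_sum (fun j _ => (hub_ctrl.2 s).1 j) (Finset.mem_univ i)
          _ = 1 := (hub_ctrl.2 s).2
      have hae0 : ∀ᵐ s ∂volume, s ∈ Icc a b → ub s i = 0 := by
        have := (integral_eq_zero_iff_of_nonneg (fun s => (hub_ctrl.2 s).1 i) hint).mp hlim1
        exact (ae_restrict_iff' measurableSet_Icc).mp (this.mono fun s hs => by simpa using hs)
      -- build the local null neighborhood
      refine ⟨Ioo a b ∩ {s | xb s ∉ χ i ∧ ub s i ≠ 0},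
        Filter.inter_mem (mem_nhdsWithin_of_mem_nhds (Ioo_mem_nhds
          (by rw [ha]; linarith) (by rw [hb]; linarith))) self_mem_nhdsWithin, ?_⟩
      rw [ae_iff] at hae0
      refine measure_mono_null ?_ hae0
      rintro s ⟨hs1, -, hs3⟩
      simp only [mem_setOf_eq, Classical.not_imp]
      exact ⟨Ioo_subset_Icc_self hs1, hs3⟩
    rw [ae_iff]
    refine measure_mono_null ?_ hBnull
    intro s hs
    simp only [mem_setOf_eq, Classical.not_imp] at hs ⊢
    exact hs
  filter_upwards [ae_all_iff.mpr key] with s hs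
  refine mem_hull_of_support _ _ (hub_ctrl.2 s) fun i hi => ⟨i, ?_, rfl⟩
  by_contra hmem
  exact hi (hs i hmem)
end
end

section
/- Let T > 0 and 0 < d_m < d_M. Let u : ℝ → U (U the simplex in ℝ²) be Lebesgue measurable and suppose there exist a sequence t_k → ∞ and switching signals σ_k ∈ S[T, d_m, d_M] such that the controls σ_k(t_k + ·) weakly converge to u. Then there exist four times 0 ≤ τ₁ < τ₂ < τ₃ < τ₄ ≤ T such that d_m ≤ τ_{i+1} − τ_i ≤ d_M for i = 1,2,3, u(s) = e₁ for almost all s ∈ [τ₁,τ₂) ∪ [τ₃,τ₄), and u(s) = e₂ for almost all s ∈ [τ₂,τ₃). -/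
open MeasureTheory Filter Set Topology

noncomputable section

open SwitchedSys Filter Set MeasureTheory

/-- The class S[T, d_m, d_M] of switching signals (modes: `0` ↦ mode 1, `1` ↦ mode 2):
for each t ≥ 0 there are t ≤ τ₁ < τ₂ < τ₃ < τ₄ ≤ t + T with d_m ≤ τ_{i+1} − τ_i ≤ d_M,
σ = 1 on [τ₁,τ₂) ∪ [τ₃,τ₄) and σ = 2 on [τ₂,τ₃). -/
def SwitchClass (Tt dm dM : ℝ) (σ : ℝ → Fin 2) : Prop :=
  IsSwitchingSignal σ ∧
  ∀ t : ℝ, 0 ≤ t → ∃ τ₁ τ₂ τ₃ τ₄ : ℝ,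
    t ≤ τ₁ ∧ τ₄ ≤ t + Tt ∧
    (dm ≤ τ₂ - τ₁ ∧ τ₂ - τ₁ ≤ dM) ∧
    (dm ≤ τ₃ - τ₂ ∧ τ₃ - τ₂ ≤ dM) ∧
    (dm ≤ τ₄ - τ₃ ∧ τ₄ - τ₃ ≤ dM) ∧
    (∀ s ∈ Ico τ₁ τ₂ ∪ Ico τ₃ τ₄, σ s = 0) ∧
    (∀ s ∈ Ico τ₂ τ₃, σ s = 1)

/-- Claim 1: any weak limit u of time-translates of switching signals in S[T,d_m,d_M]
inherits, on [0,T], a pattern of four times with u = e₁ a.e. on [τ₁,τ₂) ∪ [τ₃,τ₄) and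
u = e₂ a.e. on [τ₂,τ₃). -/
theorem weak_limit_switching_pattern (Tt dm dM : ℝ)
    (hTt : 0 < Tt) (hdm : 0 < dm) (hdM : dm < dM)
    (u : ℝ → Fin 2 → ℝ) (hu_meas : Measurable u) (hu_U : ∀ t, u t ∈ simplexU 2)
    (t : ℕ → ℝ) (ht : Tendsto t atTop atTop)
    (σ : ℕ → ℝ → Fin 2) (hσ : ∀ k, SwitchClass Tt dm dM (σ k))
    (hconv : WeakConv (fun k s => ctrlOfSwitch (σ k) (t k + s)) u) :
    ∃ τ₁ τ₂ τ₃ τ₄ : ℝ,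
      0 ≤ τ₁ ∧ τ₄ ≤ Tt ∧ τ₁ < τ₂ ∧ τ₂ < τ₃ ∧ τ₃ < τ₄ ∧
      (dm ≤ τ₂ - τ₁ ∧ τ₂ - τ₁ ≤ dM) ∧
      (dm ≤ τ₃ - τ₂ ∧ τ₃ - τ₂ ≤ dM) ∧
      (dm ≤ τ₄ - τ₃ ∧ τ₄ - τ₃ ≤ dM) ∧
      (∀ᵐ s ∂volume, s ∈ Ico τ₁ τ₂ ∪ Ico τ₃ τ₄ → u s = stdVec 2 0) ∧
      (∀ᵐ s ∂volume, s ∈ Ico τ₂ τ₃ → u s = stdVec 2 1) := by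
  classical
  obtain ⟨K, hK⟩ := eventually_atTop.mp (ht.eventually (eventually_ge_atTop 0))
  have hp0 : ∀ m : ℕ, ∃ q₁ q₂ q₃ q₄ : ℝ, t (m+K) ≤ q₁ ∧ q₄ ≤ t (m+K) + Tt ∧
      (dm ≤ q₂ - q₁ ∧ q₂ - q₁ ≤ dM) ∧ (dm ≤ q₃ - q₂ ∧ q₃ - q₂ ≤ dM) ∧
      (dm ≤ q₄ - q₃ ∧ q₄ - q₃ ≤ dM) ∧
      (∀ s ∈ Ico q₁ q₂ ∪ Ico q₃ q₄, σ (m+K) s = 0) ∧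
      (∀ s ∈ Ico q₂ q₃, σ (m+K) s = 1) :=
    fun m => (hσ (m+K)).2 (t (m+K)) (hK (m+K) (Nat.le_add_left K m))
  choose p1 p2 p3 p4 hp using hp0
  set v : ℕ → Fin 4 → ℝ := fun m =>
    ![p1 m - t (m+K), p2 m - t (m+K), p3 m - t (m+K), p4 m - t (m+K)] with hv
  have hb : ∀ m, v m ∈ Icc (fun _ : Fin 4 => (0:ℝ)) (fun _ : Fin 4 => Tt) := by
    intro m
    obtain ⟨h1, h2, ⟨h3,h4⟩, ⟨h5,h6⟩, ⟨h7,h8⟩, -, -⟩ := hp m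
    rw [Set.mem_Icc]
    constructor <;> rw [Pi.le_def] <;> intro i <;> fin_cases i <;> simp [hv] <;> linarith
  obtain ⟨L, -, φ, hφ, hvlim⟩ := (isCompact_Icc
    (a := fun _ : Fin 4 => (0:ℝ)) (b := fun _ : Fin 4 => Tt)).tendsto_subseq hb
  have hc : ∀ i : Fin 4, Tendsto (fun m => v (φ m) i) atTop (𝓝 (L i)) :=
    fun i => (tendsto_pi_nhds.1 hvlim) i
  -- basic inequalities on the limit times
  have h00 : 0 ≤ L 0 := by
    refine ge_of_tendsto' (hc 0) fun m => ?_
    have := (hp (φ m)).1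
    simp only [hv]; simp; linarith
  have h3T : L 3 ≤ Tt := by
    refine le_of_tendsto' (hc 3) fun m => ?_
    have := (hp (φ m)).2.1
    simp only [hv]; simp; linarith
  have gap : ∀ (i j : Fin 4), (∀ m, dm ≤ v m j - v m i ∧ v m j - v m i ≤ dM) →
      dm ≤ L j - L i ∧ L j - L i ≤ dM := by
    intro i j hij
    constructor
    · exact ge_of_tendsto' ((hc j).sub (hc i)) fun m => (hij (φ m)).1
    · exact le_of_tendsto' ((hc j).sub (hc i)) fun m => (hij (φ m)).2
  have g01 : dm ≤ L 1 - L 0 ∧ L 1 - L 0 ≤ dM := by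
    refine gap 0 1 fun m => ?_
    have := (hp m).2.2.1
    simp only [hv]; simp; constructor <;> linarith [this.1, this.2]
  have g12 : dm ≤ L 2 - L 1 ∧ L 2 - L 1 ≤ dM := by
    refine gap 1 2 fun m => ?_
    have := (hp m).2.2.2.1
    simp only [hv]; simp; constructor <;> linarith [this.1, this.2]
  have g23 : dm ≤ L 3 - L 2 ∧ L 3 - L 2 ≤ dM := by
    refine gap 2 3 fun m => ?_
    have := (hp m).2.2.2.2.1
    simp only [hv]; simp; constructor <;> linarith [this.1, this.2]
  -- the key weak-convergence argument
  have hmeasj : ∀ j : Fin 2, Measurable fun x => u x j :=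
    fun j => (measurable_pi_apply j).comp hu_meas
  have hle1 : ∀ (x : ℝ) (j : Fin 2), u x j ≤ 1 := by
    intro x j
    have h := Finset.single_le_sum (f := fun i => u x i)
      (fun i _ => (hu_U x).1 i) (Finset.mem_univ j)
    rwa [(hu_U x).2] at h
  have hsum2 : ∀ x : ℝ, u x 0 + u x 1 = 1 := by
    intro x
    have := (hu_U x).2
    rwa [Fin.sum_univ_two] at this
  have key : ∀ (j : Fin 2) (a b : ℝ),
      (∀ᶠ m in atTop, ∀ s ∈ Icc a b, σ (φ m + K) (t (φ m + K) + s) ≠ j) →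
      ∫ x in Icc a b, u x j = 0 := by
    intro j a b hev
    set g : ℝ → Fin 2 → ℝ := (Icc a b).indicator (fun _ => stdVec 2 j) with hg
    have hgint : Integrable g volume := by
      rw [hg]
      exact (integrable_indicator_iff measurableSet_Icc).2
        (integrableOn_const measure_Icc_lt_top.ne)
    have hsum : ∀ (vv : ℝ → Fin 2 → ℝ) (x : ℝ),
        (∑ i, g x i * vv x i) = (Icc a b).indicator (fun y => vv y j) x := by
      intro vv x
      by_cases hx : x ∈ Icc a b
      · simp only [hg, Set.indicator_of_mem hx, Fin.sum_univ_two, stdVec]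
        fin_cases j <;> simp
      · simp [hg, Set.indicator_of_notMem hx]
    have h1 := hconv g hgint
    have hrhs : (∫ x : ℝ, ∑ i, g x i * u x i) = ∫ x in Icc a b, u x j := by
      rw [← integral_indicator measurableSet_Icc]
      exact integral_congr_ae (Filter.Eventually.of_forall fun x => hsum u x)
    rw [hrhs] at h1
    have h2 := h1.comp (hφ.add_const K).tendsto_atTop
    have h3 : (fun k => ∫ x : ℝ, ∑ i, g x i * ctrlOfSwitch (σ k) (t k + x) i) ∘
        (fun m => φ m + K) =ᶠ[atTop] fun _ => (0:ℝ) := by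
      filter_upwards [hev] with m hm
      show (∫ x : ℝ, ∑ i, g x i * ctrlOfSwitch (σ (φ m + K)) (t (φ m + K) + x) i) = 0
      have hz : ∀ x : ℝ, (∑ i, g x i * ctrlOfSwitch (σ (φ m + K)) (t (φ m + K) + x) i) = 0 := by
        intro x
        rw [hsum (fun y => ctrlOfSwitch (σ (φ m + K)) (t (φ m + K) + y)) x]
        by_cases hx : x ∈ Icc a b
        · rw [Set.indicator_of_mem hx]
          have hne := hm x hx
          simp only [ctrlOfSwitch, stdVec]
          rw [if_neg fun h => hne h.symm]
        · rw [Set.indicator_of_notMem hx]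
      simp only [hz, integral_zero]
    exact tendsto_nhds_unique (h2.congr' h3) tendsto_const_nhds
  have hψmono : StrictMono fun m => φ m + K := hφ.add_const K
  -- from zero integrals on all compact subintervals to a.e. vanishing on the open interval
  have key2 : ∀ (j : Fin 2) (c d : ℝ),
      (∀ a b : ℝ, c < a → b < d →
        ∀ᶠ m in atTop, ∀ s ∈ Icc a b, σ (φ m + K) (t (φ m + K) + s) ≠ j) →
      ∀ᵐ s : ℝ, s ∈ Ioo c d → u s j = 0 := by
    intro j c d hcd
    have hae : ∀ n : ℕ, ∀ᵐ s : ℝ,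
        s ∈ Icc (c + 1/(n+1)) (d - 1/(n+1)) → u s j = 0 := by
      intro n
      set a : ℝ := c + 1/(n+1)
      set b : ℝ := d - 1/(n+1)
      have hca : c < a := by
        have : (0:ℝ) < 1/(n+1) := by positivity
        simp only [a]; linarith
      have hbd : b < d := by
        have : (0:ℝ) < 1/(n+1) := by positivity
        simp only [b]; linarith
      have hint0 := key j a b (hcd a b hca hbd)
      have hintOn : IntegrableOn (fun x => u x j) (Icc a b) volume := by
        refine Integrable.mono' (g := fun _ => (1:ℝ))
          (integrableOn_const measure_Icc_lt_top.ne)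
          ((hmeasj j).aestronglyMeasurable.restrict)
          (Filter.Eventually.of_forall fun x => ?_)
        show ‖u x j‖ ≤ 1
        rw [Real.norm_eq_abs, abs_of_nonneg ((hu_U x).1 j)]
        exact hle1 x j
      have hnn : (0:ℝ → ℝ) ≤ᵐ[volume.restrict (Icc a b)] fun x => u x j :=
        Filter.Eventually.of_forall fun x => (hu_U x).1 j
      have hz := (setIntegral_eq_zero_iff_of_nonneg_ae hnn hintOn).1 hint0
      have hz' : ∀ᵐ x ∂volume.restrict (Icc a b), u x j = 0 := by
        filter_upwards [hz] with x hx using hx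
      exact (ae_restrict_iff' measurableSet_Icc).1 hz'
    have hall : ∀ᵐ s : ℝ, ∀ n : ℕ,
        s ∈ Icc (c + 1/(n+1)) (d - 1/(n+1)) → u s j = 0 := ae_all_iff.2 hae
    filter_upwards [hall] with s hs hmem
    obtain ⟨hcs, hsd⟩ := hmem
    obtain ⟨n, hn⟩ := exists_nat_one_div_lt (lt_min (sub_pos.2 hcs) (sub_pos.2 hsd))
    have hn1 := lt_of_lt_of_le hn (min_le_left _ _)
    have hn2 := lt_of_lt_of_le hn (min_le_right _ _)
    exact hs n ⟨by linarith, by linarith⟩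
  -- instantiate for the three intervals
  have hval : ∀ (m : ℕ) (x : ℝ) (i1 i2 : Fin 4), i1 = 0 ∧ i2 = 1 ∨ i1 = 2 ∧ i2 = 3 →
      v (φ m) i1 ≤ x → x < v (φ m) i2 → σ (φ m + K) (t (φ m + K) + x) = 0 := by
    intro m x i1 i2 hi h1 h2
    have hpat := (hp (φ m)).2.2.2.2.2.1
    rcases hi with ⟨e1, e2⟩ | ⟨e1, e2⟩ <;> subst e1 <;> subst e2 <;>
      simp only [hv, Matrix.cons_val_zero, Matrix.cons_val_one, Matrix.head_cons,
        Matrix.cons_val_two, Matrix.tail_cons, Matrix.cons_val_three] at h1 h2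
    · exact hpat _ (Or.inl ⟨by linarith, by linarith⟩)
    · exact hpat _ (Or.inr ⟨by linarith, by linarith⟩)
  have hev1 : ∀ᵐ s : ℝ, s ∈ Ioo (L 0) (L 1) → u s 1 = 0 := by
    refine key2 1 (L 0) (L 1) fun a b hca hbd => ?_
    filter_upwards [(hc 0).eventually_lt_const hca, (hc 1).eventually_const_lt hbd]
      with m hm1 hm2 x hx
    have := hval m x 0 1 (Or.inl ⟨rfl, rfl⟩) (le_trans hm1.le hx.1) (lt_of_le_of_lt hx.2 hm2)
    simp [this]
  have hev3 : ∀ᵐ s : ℝ, s ∈ Ioo (L 2) (L 3) → u s 1 = 0 := by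
    refine key2 1 (L 2) (L 3) fun a b hca hbd => ?_
    filter_upwards [(hc 2).eventually_lt_const hca, (hc 3).eventually_const_lt hbd]
      with m hm1 hm2 x hx
    have := hval m x 2 3 (Or.inr ⟨rfl, rfl⟩) (le_trans hm1.le hx.1) (lt_of_le_of_lt hx.2 hm2)
    simp [this]
  have hev2 : ∀ᵐ s : ℝ, s ∈ Ioo (L 1) (L 2) → u s 0 = 0 := by
    refine key2 0 (L 1) (L 2) fun a b hca hbd => ?_
    filter_upwards [(hc 1).eventually_lt_const hca, (hc 2).eventually_const_lt hbd]
      with m hm1 hm2 x hx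
    have hpat := (hp (φ m)).2.2.2.2.2.2
    have h1 : v (φ m) 1 ≤ x := le_trans hm1.le hx.1
    have h2 : x < v (φ m) 2 := lt_of_le_of_lt hx.2 hm2
    simp only [hv, Matrix.cons_val_one, Matrix.head_cons, Matrix.cons_val_two,
      Matrix.tail_cons, Matrix.cons_val_zero] at h1 h2
    have := hpat (t (φ m + K) + x) ⟨by linarith, by linarith⟩
    simp [this]
  have hsimplex0 : ∀ x : ℝ, u x 1 = 0 → u x = stdVec 2 0 := by
    intro x hx
    funext i
    have := hsum2 x
    fin_cases i <;> simp [stdVec] <;> linarith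
  have hsimplex1 : ∀ x : ℝ, u x 0 = 0 → u x = stdVec 2 1 := by
    intro x hx
    funext i
    have := hsum2 x
    fin_cases i <;> simp [stdVec] <;> linarith
  have hne : ∀ c : ℝ, ∀ᵐ s : ℝ, s ≠ c := by
    intro c
    rw [ae_iff]
    simpa using measure_singleton c
  refine ⟨L 0, L 1, L 2, L 3, h00, h3T, by linarith [g01.1], by linarith [g12.1],
    by linarith [g23.1], g01, g12, g23, ?_, ?_⟩
  · filter_upwards [hev1, hev3, hne (L 0), hne (L 2)] with s hA hB hn0 hn2 hmem
    rcases hmem with ⟨hs1, hs2⟩ | ⟨hs1, hs2⟩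
    · exact hsimplex0 s (hA ⟨lt_of_le_of_ne hs1 (Ne.symm hn0), hs2⟩)
    · exact hsimplex0 s (hB ⟨lt_of_le_of_ne hs1 (Ne.symm hn2), hs2⟩)
  · filter_upwards [hev2, hne (L 1)] with s hC hn1 hmem
    exact hsimplex1 s (hC ⟨lt_of_le_of_ne hmem.1 (Ne.symm hn1), hmem.2⟩)
end
end

section
/- Let a > 0, T₀ > 0 and δ₀ > 0. Let ū = (ū₁, ū₂) : ℝ → U be Lebesgue measurable with values in the simplex U ⊆ ℝ², and let x̄ = (x̄₁, x̄₂) : ℝ → ℝ² be locally absolutely continuous, such that for almost all t ∈ ℝ: x̄₁′(t) = [ū₁(t) + a ū₂(t)] x̄₂(t), x̄₂′(t) = −ū₁(t) x̄₁(t), and ū₂(t) |x̄₁(t)| = 0. Assume moreover that the Lebesgue measure of {t ∈ [0, T₀] : ū₂(t) > 0} is at least δ₀. Then the set {t ∈ [0, T₀] : x̄(t) = 0} has Lebesgue measure at least δ₀; in particular there exists t* ∈ [0, T₀] with x̄(t*) = 0. -/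
open MeasureTheory Filter Set Topology

noncomputable section

open SwitchedSys Filter Set MeasureTheory


/-- The set of points of `S ⊆ ℝ` that are isolated in `S` is countable. -/
lemma countable_isolated_in (S : Set ℝ) :
    Set.Countable {t | t ∈ S ∧ 𝓝[S \ {t}] t = ⊥} := by
  have hsub : {t | t ∈ S ∧ 𝓝[S \ {t}] t = ⊥} ⊆
      ⋃ (p : ℚ) (q : ℚ),
        {t | t ∈ S ∧ t ∈ Ioo (p:ℝ) (q:ℝ) ∧ Ioo (p:ℝ) (q:ℝ) ∩ S ⊆ {t}} := by
    rintro t ⟨htS, hbot⟩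
    have hmem : (∅ : Set ℝ) ∈ 𝓝[S \ {t}] t := by rw [hbot]; exact Filter.mem_bot
    rcases mem_nhdsWithin.mp hmem with ⟨U, hUo, htU, hUsub⟩
    rcases Metric.mem_nhds_iff.mp (hUo.mem_nhds htU) with ⟨ε, hε, hball⟩
    rcases exists_rat_btwn (show t - ε < t by linarith) with ⟨p, hp1, hp2⟩
    rcases exists_rat_btwn (show t < t + ε by linarith) with ⟨q, hq1, hq2⟩
    refine Set.mem_iUnion.mpr ⟨p, Set.mem_iUnion.mpr ⟨q, htS, ⟨hp2, hq1⟩, ?_⟩⟩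
    rintro s ⟨hsIoo, hsS⟩
    by_contra hst
    have hsU : s ∈ U := by
      apply hball
      rw [Real.ball_eq_Ioo]
      exact ⟨by linarith [hsIoo.1], by linarith [hsIoo.2]⟩
    exact absurd (hUsub ⟨hsU, hsS, hst⟩) (by simp)
  refine Set.Countable.mono hsub
    (Set.countable_iUnion fun p => Set.countable_iUnion fun q =>
      Set.Subsingleton.countable ?_)
  rintro s ⟨hsS, hsI, hs⟩ r ⟨hrS, hrI, _⟩
  exact (hs ⟨hrI, hrS⟩ : r = s).symm

/-- Analysis of the reduced limiting control system of the motivating example: if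
(x̄, ū) solves x̄₁′ = (ū₁ + aū₂)x̄₂, x̄₂′ = −ū₁x̄₁ with zero output ū₂|x̄₁| = 0 a.e., and
ū₂ > 0 on a subset of [0,T₀] of measure at least δ₀, then x̄ vanishes on a subset of
[0,T₀] of measure at least δ₀; in particular x̄(t*) = 0 for some t* ∈ [0,T₀]. -/
theorem motivating_example_reduced_system_vanishes
    (a T₀ δ₀ : ℝ) (ha : 0 < a) (hT₀ : 0 < T₀) (hδ₀ : 0 < δ₀)
    (u₁ u₂ x₁ x₂ : ℝ → ℝ)
    (hu_meas : Measurable u₁ ∧ Measurable u₂)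
    (hu_U : ∀ t, 0 ≤ u₁ t ∧ 0 ≤ u₂ t ∧ u₁ t + u₂ t = 1)
    (hx₁_ac : LocAC x₁) (hx₂_ac : LocAC x₂)
    (hode : ∀ᵐ t ∂volume,
      HasDerivAt x₁ ((u₁ t + a * u₂ t) * x₂ t) t ∧
      HasDerivAt x₂ (-(u₁ t * x₁ t)) t ∧
      u₂ t * |x₁ t| = 0)
    (hmeas : ENNReal.ofReal δ₀ ≤ volume {t | t ∈ Icc (0:ℝ) T₀ ∧ 0 < u₂ t}) :
    ENNReal.ofReal δ₀ ≤ volume {t | t ∈ Icc (0:ℝ) T₀ ∧ x₁ t = 0 ∧ x₂ t = 0} ∧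
      ∃ tstar ∈ Icc (0:ℝ) T₀, x₁ tstar = 0 ∧ x₂ tstar = 0 := by
  classical
  -- the null set where the ODE fails
  set P : ℝ → Prop := fun t =>
    HasDerivAt x₁ ((u₁ t + a * u₂ t) * x₂ t) t ∧
    HasDerivAt x₂ (-(u₁ t * x₁ t)) t ∧
    u₂ t * |x₁ t| = 0 with hP
  have hN : volume {t | ¬ P t} = 0 := hode
  set S : Set ℝ := {t | x₁ t = 0} with hS
  set A : Set ℝ := {t | t ∈ Icc (0:ℝ) T₀ ∧ 0 < u₂ t} with hA
  set B : Set ℝ := A \ {t | ¬ P t} with hB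
  set C : Set ℝ := {t | t ∈ S ∧ 𝓝[S \ {t}] t = ⊥} with hC
  have hCnull : volume C = 0 := (countable_isolated_in S).measure_zero _
  set Z : Set ℝ := {t | t ∈ Icc (0:ℝ) T₀ ∧ x₁ t = 0 ∧ x₂ t = 0} with hZ
  -- points of B have x₁ = 0
  have hBx₁ : ∀ t ∈ B, x₁ t = 0 := by
    rintro t ⟨⟨_, hu2⟩, hPt⟩
    have hPt' : P t := not_not.mp hPt
    have := hPt'.2.2
    have habs : |x₁ t| = 0 := by
      rcases mul_eq_zero.mp this with h | h
      · exact absurd h (ne_of_gt hu2)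
      · exact h
    exact abs_eq_zero.mp habs
  -- key: B minus isolated points is contained in Z
  have hBCZ : B \ C ⊆ Z := by
    rintro t ⟨htB, htC⟩
    have hx1 : x₁ t = 0 := hBx₁ t htB
    obtain ⟨⟨hIcc, hu2⟩, hPt⟩ := htB
    have hPt' : P t := not_not.mp hPt
    have htS : t ∈ S := hx1
    have hne : (𝓝[S \ {t}] t).NeBot := by
      refine ⟨fun h => htC ⟨htS, h⟩⟩
    -- slope of x₁ at t tends to the derivative along S \ {t}
    have h1 : Filter.Tendsto (slope x₁ t) (𝓝[S \ {t}] t)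
        (𝓝 ((u₁ t + a * u₂ t) * x₂ t)) := by
      refine (hasDerivAt_iff_tendsto_slope.mp hPt'.1).mono_left
        (nhdsWithin_mono t ?_)
      intro s hs
      exact hs.2
    have h2 : Filter.Tendsto (slope x₁ t) (𝓝[S \ {t}] t) (𝓝 0) := by
      refine Filter.Tendsto.congr' ?_ tendsto_const_nhds
      filter_upwards [self_mem_nhdsWithin] with s hs
      have : x₁ s = 0 := hs.1
      simp [slope_def_field, this, hx1]
    have hkey : (u₁ t + a * u₂ t) * x₂ t = 0 := tendsto_nhds_unique h1 h2
    have hpos : 0 < u₁ t + a * u₂ t := by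
      have h := hu_U t
      have := mul_pos ha hu2
      linarith [h.1]
    have hx2 : x₂ t = 0 := by
      rcases mul_eq_zero.mp hkey with h | h
      · exact absurd h (ne_of_gt hpos)
      · exact h
    exact ⟨hIcc, hx1, hx2⟩
  have hmain : ENNReal.ofReal δ₀ ≤ volume Z := by
    calc ENNReal.ofReal δ₀ ≤ volume A := hmeas
      _ ≤ volume (B ∪ {t | ¬ P t}) := measure_mono (subset_diff_union _ _)
      _ ≤ volume B + volume {t | ¬ P t} := measure_union_le _ _
      _ = volume B := by rw [hN, add_zero]
      _ ≤ volume ((B \ C) ∪ C) := measure_mono (subset_diff_union _ _)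
      _ ≤ volume (B \ C) + volume C := measure_union_le _ _
      _ = volume (B \ C) := by rw [hCnull, add_zero]
      _ ≤ volume Z := measure_mono hBCZ
  refine ⟨hmain, ?_⟩
  have hZne : Z.Nonempty := by
    apply nonempty_of_measure_ne_zero (μ := volume)
    intro h
    rw [h] at hmain
    exact absurd hmain (by simpa using hδ₀)
  obtain ⟨t, ht⟩ := hZne
  exact ⟨t, ht.1, ht.2⟩
end
end
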